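/- arXiv:1508.00436 — 8 statements merged into one kernel-verified Lean document; each statement's English description precedes it below -/
import Mathlib

section
/- Let V be a finite set and let d : V × V → ℝ be a symmetric function with d(i,i) = 0 for all i and d(i,j) > 0 for all i ≠ j, such that for every four (not necessarily distinct) elements i, j, k, l ∈ V, max(d(i,k) + d(j,l), d(i,l) + d(j,k)) ≥ d(i,j) + d(k,l). Then there exists a finite tree T = (U, E) with V ⊆ U and nonnegative edge lengths d_e ≥ 0, e ∈ E, such that d(i,j) = Σ_{e ∈ ph(i,j)} d_e for all i, j ∈ V (i.e., d is a tree metric). -/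
/-!
Fix a base point `r` and let `(i | j) = (d r i + d r j - d i j) / 2` be the Gromov product. The
four-point condition gives `min (i | k) (j | k) ≤ (i | j)`, so for every level `t` the relation
`t ≤ (i | j)` is an equivalence on the points `i` with `t ≤ d r i`. Its classes, for `t` ranging
over the finitely many values of the Gromov product, are the nodes of a rooted tree (a dendrogram)
in which the class of `i` at level `t` hangs below its class at the previous level. If the edge
from a node at level `t` to its parent at level `t'` has length `t - t'`, the path from the leaf
of `i` to the leaf of `j` turns at level `(i | j)` and has length
`d r i + d r j - 2 (i | j) = d i j`.
-/

namespace SimpleGraph.Walk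

variable {V : Type*} {G : SimpleGraph V}

theorem IsPath.append {u v w : V} {p : G.Walk u v} {q : G.Walk v w} (hp : p.IsPath)
    (hq : q.IsPath) (h : ∀ x ∈ p.support, x ∈ q.support → x = v) : (p.append q).IsPath := by
  have hq' := (isPath_def q).1 hq
  rw [← cons_tail_support, List.nodup_cons] at hq'
  rw [isPath_def, support_append, List.nodup_append]
  refine ⟨(isPath_def p).1 hp, hq'.2, ?_⟩
  rintro x hxp _ hxq rfl
  exact hq'.1 (h x hxp (List.mem_of_mem_tail hxq) ▸ hxq)

end SimpleGraph.Walk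

open SimpleGraph Walk

section HeightDiff

variable {α : Type*} (f : α → ℝ)

def heightDiff : Sym2 α → ℝ :=
  Sym2.lift ⟨fun a b => |f a - f b|, fun _ _ => abs_sub_comm _ _⟩

@[simp]
lemma heightDiff_mk (a b : α) : heightDiff f s(a, b) = |f a - f b| := rfl

lemma heightDiff_nonneg (e : Sym2 α) : 0 ≤ heightDiff f e := by
  induction e using Sym2.ind with
  | _ a b => exact abs_nonneg _

end HeightDiff

lemma Finset.exists_rank {α : Type*} [LinearOrder α] (s : Finset α) (hs : s.Nonempty) :
    ∃ (rank : α → ℕ) (val : ℕ → α),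
      Monotone val ∧ MonotoneOn rank s ∧ ∀ a ∈ s, val (rank a) = a := by
  classical
  have hn := hs.card_pos
  let e := s.orderIsoOfFin rfl
  refine ⟨fun a => if h : a ∈ s then (e.symm ⟨a, h⟩ : ℕ) else 0,
    fun k => s.orderEmbOfFin rfl ⟨min k (s.card - 1), by omega⟩,
    fun k l hkl => (s.orderEmbOfFin rfl).monotone (Fin.mk_le_mk.2 (min_le_min_right _ hkl)),
    fun a ha b hb hab => ?_, fun a ha => ?_⟩
  · rw [Finset.mem_coe] at ha hb
    simp only [dif_pos ha, dif_pos hb, Fin.val_fin_le]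
    exact e.symm.monotone (Subtype.mk_le_mk.2 hab)
  · have hlt := (e.symm ⟨a, ha⟩).isLt
    simp only [dif_pos ha, min_eq_left (Nat.le_sub_one_of_lt hlt), Fin.eta,
      ← Finset.coe_orderIsoOfFin_apply]
    exact congrArg Subtype.val (e.apply_symm_apply _)

section ParentGraph

variable {U : Type*} (par : U → U)

def parentGraph : SimpleGraph U := SimpleGraph.fromRel fun u v => par u = v

variable {par}

lemma parentGraph_adj {u v : U} :
    (parentGraph par).Adj u v ↔ u ≠ v ∧ (par u = v ∨ par v = u) :=
  SimpleGraph.fromRel_adj _ _ _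

lemma parentGraph_adj_self {u : U} (hu : par u ≠ u) : (parentGraph par).Adj u (par u) :=
  parentGraph_adj.2 ⟨hu.symm, Or.inl rfl⟩

open Classical in
variable (par) in
noncomputable def parentWalk : (n : ℕ) → (u : U) → (parentGraph par).Walk u (par^[n] u)
  | 0, _ => nil
  | n + 1, u =>
    if hu : par u = u then (parentWalk n u).copy rfl (by rw [Function.iterate_succ_apply, hu])
    else cons (parentGraph_adj_self hu) (parentWalk n (par u))

lemma mem_support_parentWalk {n : ℕ} {u x : U} (hx : x ∈ (parentWalk par n u).support) :
    ∃ k ≤ n, par^[k] u = x := by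
  induction n generalizing u with
  | zero => exact ⟨0, le_rfl, ((List.mem_singleton).1 hx).symm⟩
  | succ n ih =>
    rw [parentWalk] at hx
    split_ifs at hx with hu
    · obtain ⟨k, hk, rfl⟩ := ih (by rwa [support_copy] at hx)
      exact ⟨k, hk.trans n.le_succ, rfl⟩
    · rcases List.mem_cons.1 hx with rfl | hx
      · exact ⟨0, n.zero_le.trans n.le_succ, rfl⟩
      · obtain ⟨k, hk, rfl⟩ := ih hx
        exact ⟨k + 1, Nat.succ_le_succ hk, rfl⟩

section Decreasing

variable {μ : U → ℕ} (hμ : ∀ u, par u ≠ u → μ (par u) < μ u)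
include hμ

lemma apply_iterate_le (k : ℕ) (u : U) : μ (par^[k] u) ≤ μ u := by
  induction k generalizing u with
  | zero => exact le_rfl
  | succ k ih =>
    refine (ih (par u)).trans ?_
    by_cases hu : par u = u
    · rw [hu]
    · exact (hμ u hu).le

lemma parentWalk_isPath (n : ℕ) (u : U) : (parentWalk par n u).IsPath := by
  induction n generalizing u with
  | zero => exact IsPath.nil
  | succ n ih =>
    rw [parentWalk]
    split_ifs with hu
    · exact (isPath_copy _ _ _).2 (ih u)
    · refine (ih (par u)).cons fun hmem => ?_
      obtain ⟨k, -, hk⟩ := mem_support_parentWalk hmem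
      have := apply_iterate_le hμ k (par u)
      rw [hk] at this
      exact (hμ u hu).not_ge this

end Decreasing

lemma sum_heightDiff_parentWalk {h : U → ℝ} (hh : ∀ u, h (par u) ≤ h u) (n : ℕ) (u : U) :
    ((parentWalk par n u).edges.map (heightDiff h)).sum = h u - h (par^[n] u) := by
  induction n generalizing u with
  | zero => simp [parentWalk]
  | succ n ih =>
    by_cases hu : par u = u
    · rw [parentWalk, dif_pos hu, edges_copy, ih, Function.iterate_succ_apply, hu]
    · have hedges : (parentWalk par (n + 1) u).edges =
          s(u, par u) :: (parentWalk par n (par u)).edges := by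
        rw [parentWalk, dif_neg hu]
        rfl
      rw [hedges, List.map_cons, List.sum_cons, ih, heightDiff_mk,
        abs_of_nonneg (sub_nonneg.2 (hh u)), Function.iterate_succ_apply]
      ring

lemma card_edgeSet_parentGraph {μ : U → ℕ} (hμ : ∀ u, par u ≠ u → μ (par u) < μ u) :
    Nat.card (parentGraph par).edgeSet = Nat.card {u // par u ≠ u} := by
  let f : {u // par u ≠ u} → (parentGraph par).edgeSet :=
    fun u => ⟨s(u.1, par u.1), parentGraph_adj_self u.2⟩
  have hf : f.Bijective := by
    constructor
    · rintro ⟨u, hu⟩ ⟨v, hv⟩ huv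
      rcases Sym2.eq_iff.1 (congrArg Subtype.val huv) with ⟨h, -⟩ | ⟨h₁, h₂⟩
      · exact Subtype.ext h
      · dsimp only at h₁ h₂
        have hu' := hμ u hu
        have hv' := hμ v hv
        rw [h₂] at hu'
        rw [← h₁] at hv'
        omega
    · rintro ⟨e, he⟩
      induction e using Sym2.ind with
      | _ a b =>
        obtain ⟨hab, h | h⟩ := parentGraph_adj.1 he
        · exact ⟨⟨a, h ▸ hab.symm⟩, Subtype.ext (by simp only [f, h])⟩
        · exact ⟨⟨b, h ▸ hab⟩, Subtype.ext (by simp only [f, h, Sym2.eq_swap])⟩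
  exact (Nat.card_congr (Equiv.ofBijective f hf)).symm

theorem isTree_parentGraph [Finite U] {μ : U → ℕ} {ρ : U}
    (hμ : ∀ u, par u ≠ u → μ (par u) < μ u) (hρ : ∀ u, par u = u ↔ u = ρ) :
    (parentGraph par).IsTree := by
  have reachable_root (u : U) : (parentGraph par).Reachable u ρ := by
    induction hn : μ u using Nat.strong_induction_on generalizing u with
    | _ n ih =>
      by_cases hu : par u = u
      · rw [(hρ u).1 hu]
      · exact (parentGraph_adj_self hu).reachable.trans (ih _ (hn ▸ hμ u hu) _ rfl)
  have : Nonempty U := ⟨ρ⟩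
  refine isTree_iff_connected_and_card.2
    ⟨⟨fun u v => (reachable_root u).trans (reachable_root v).symm⟩, ?_⟩
  have := Fintype.ofFinite U
  classical
  rw [card_edgeSet_parentGraph hμ, Nat.card_congr (Equiv.subtypeEquivRight fun u => (hρ u).not)]
  simp only [Nat.card_eq_fintype_card, Fintype.card_subtype_compl, Fintype.card_unique]
  have := Fintype.card_pos_iff.2 ⟨ρ⟩
  omega

end ParentGraph

/-- A rooted tree with leaves indexed by `ι`, encoded by the depths `meet i j` at which the
branches from the root to the leaves `i` and `j` separate; the leaf `i` has depth `meet i i`. -/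
structure Dendrogram (ι : Type*) where
  meet : ι → ι → ℕ
  meet_comm : ∀ i j, meet i j = meet j i
  min_le_meet : ∀ i j k, min (meet i k) (meet j k) ≤ meet i j

namespace Dendrogram

variable {ι : Type*} (D : Dendrogram ι)

lemma meet_le_meet_self (i j : ι) : D.meet i j ≤ D.meet i i := by
  simpa using D.min_le_meet i i j

lemma meet_le_meet_self' (i j : ι) : D.meet i j ≤ D.meet j j :=
  D.meet_comm i j ▸ D.meet_le_meet_self j i

/-- `⟨i, k⟩` is the node at depth `k` on the branch from the root to the leaf `i`. -/
def setoid : Setoid (Σ i, Fin (D.meet i i + 1)) where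
  r p q := (p.2 : ℕ) = q.2 ∧ (p.2 : ℕ) ≤ D.meet p.1 q.1
  iseqv.refl p := ⟨rfl, Nat.lt_succ_iff.1 p.2.2⟩
  iseqv.symm {p q} := fun ⟨h, h'⟩ => ⟨h.symm, by rw [← h, D.meet_comm q.1 p.1]; exact h'⟩
  iseqv.trans {p q r} := fun ⟨h₁, h₁'⟩ ⟨h₂, h₂'⟩ => ⟨h₁.trans h₂,
    (le_min h₁' (by rw [h₁, D.meet_comm r.1 q.1]; exact h₂')).trans (D.min_le_meet _ _ _)⟩

abbrev Node : Type _ := Quotient D.setoid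

-- Clamped, so that `node i k` is the leaf `i` whenever `meet i i ≤ k`.
def node (i : ι) (k : ℕ) : D.Node :=
  Quotient.mk _ ⟨i, ⟨min k (D.meet i i), Nat.lt_succ_of_le (min_le_right _ _)⟩⟩

def leaf (i : ι) : D.Node := D.node i (D.meet i i)

lemma node_eq_node_iff {i j : ι} {k l : ℕ} (hk : k ≤ D.meet i i) (hl : l ≤ D.meet j j) :
    D.node i k = D.node j l ↔ k = l ∧ k ≤ D.meet i j := by
  rw [node, node, Quotient.eq]
  change min k _ = min l _ ∧ min k _ ≤ D.meet i j ↔ _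
  rw [min_eq_left hk, min_eq_left hl]

lemma node_meet_comm (i j : ι) : D.node i (D.meet i j) = D.node j (D.meet i j) :=
  (D.node_eq_node_iff (D.meet_le_meet_self i j) (D.meet_le_meet_self' i j)).2
    ⟨rfl, le_rfl⟩

lemma exists_eq_node (u : D.Node) : ∃ i k, k ≤ D.meet i i ∧ u = D.node i k := by
  induction u using Quotient.ind with
  | _ p =>
    have hp := Nat.lt_succ_iff.1 p.2.2
    exact ⟨p.1, p.2, hp, Quotient.sound ⟨(min_eq_left hp).symm, hp⟩⟩

def depth : D.Node → ℕ := Quotient.lift (fun p => (p.2 : ℕ)) fun _ _ h => h.1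

lemma depth_node {i : ι} {k : ℕ} (hk : k ≤ D.meet i i) : D.depth (D.node i k) = k :=
  min_eq_left hk

def parent : D.Node → D.Node :=
  Quotient.lift (fun p => D.node p.1 (p.2 - 1)) fun p q ⟨h, h'⟩ => by
    have hp := Nat.lt_succ_iff.1 p.2.2
    have hq := Nat.lt_succ_iff.1 q.2.2
    exact (D.node_eq_node_iff (by omega) (by omega)).2 ⟨by rw [h], by omega⟩

lemma parent_node {i : ι} {k : ℕ} (hk : k ≤ D.meet i i) :
    D.parent (D.node i k) = D.node i (k - 1) := by
  change D.node i (min k (D.meet i i) - 1) = _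
  rw [min_eq_left hk]

lemma iterate_parent_node {i : ι} {k : ℕ} (hk : k ≤ D.meet i i) (n : ℕ) :
    D.parent^[n] (D.node i k) = D.node i (k - n) := by
  induction n with
  | zero => rfl
  | succ n ih => rw [Function.iterate_succ_apply', ih, parent_node _ (by omega), Nat.sub_sub]

lemma depth_parent (u : D.Node) : D.depth (D.parent u) = D.depth u - 1 := by
  obtain ⟨i, k, hk, rfl⟩ := D.exists_eq_node u
  rw [parent_node _ hk, depth_node _ hk, depth_node _ (by omega)]

lemma parent_eq_self_iff {i₀ : ι} (u : D.Node) : D.parent u = u ↔ u = D.node i₀ 0 := by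
  obtain ⟨i, k, hk, rfl⟩ := D.exists_eq_node u
  rw [parent_node _ hk, D.node_eq_node_iff (by omega) hk, D.node_eq_node_iff hk (Nat.zero_le _)]
  omega

abbrev tree : SimpleGraph D.Node := parentGraph D.parent

lemma depth_parent_lt (u : D.Node) (hu : D.parent u ≠ u) : D.depth (D.parent u) < D.depth u := by
  obtain ⟨i, k, hk, rfl⟩ := D.exists_eq_node u
  rw [parent_node _ hk] at hu ⊢
  rw [depth_node _ hk, depth_node _ (by omega)]
  rcases Nat.eq_zero_or_pos k with rfl | hk0
  · exact absurd rfl hu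
  · omega

theorem isTree_tree [Finite ι] [Nonempty ι] : D.tree.IsTree :=
  isTree_parentGraph D.depth_parent_lt (D.parent_eq_self_iff (i₀ := Classical.arbitrary ι))

lemma iterate_parent_leaf (i j : ι) :
    D.parent^[D.meet i i - D.meet i j] (D.leaf i) = D.node i (D.meet i j) := by
  rw [leaf, iterate_parent_node _ le_rfl, Nat.sub_sub_self (D.meet_le_meet_self i j)]

noncomputable def leafPath (i j : ι) : D.tree.Walk (D.leaf i) (D.leaf j) :=
  ((parentWalk D.parent _ (D.leaf i)).copy rfl (D.iterate_parent_leaf i j)).append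
    ((parentWalk D.parent _ (D.leaf j)).copy rfl
      ((D.iterate_parent_leaf j i).trans (by rw [D.meet_comm, D.node_meet_comm]))).reverse

theorem isPath_leafPath (i j : ι) : (D.leafPath i j).IsPath := by
  refine IsPath.append ((isPath_copy _ _ _).2 (parentWalk_isPath D.depth_parent_lt _ _))
    ((isPath_copy _ _ _).2 (parentWalk_isPath D.depth_parent_lt _ _)).reverse fun x hx hx' => ?_
  rw [support_copy] at hx
  rw [support_reverse, List.mem_reverse, support_copy] at hx'
  obtain ⟨k, hk, rfl⟩ := mem_support_parentWalk hx
  obtain ⟨l, hl, hkl⟩ := mem_support_parentWalk hx'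
  have hij := D.meet_le_meet_self i j
  have hji := D.meet_le_meet_self j i
  rw [leaf, iterate_parent_node _ le_rfl] at hkl ⊢
  rw [leaf, iterate_parent_node _ le_rfl, D.node_eq_node_iff (by omega) (by omega),
    D.meet_comm j i] at hkl
  congr 1
  omega

lemma sum_leafPath {h : ℕ → ℝ} (hh : Monotone h) (i j : ι) :
    ((D.leafPath i j).edges.map (heightDiff (h ∘ D.depth))).sum =
      h (D.meet i i) + h (D.meet j j) - 2 * h (D.meet i j) := by
  have hpar (u : D.Node) : (h ∘ D.depth) (D.parent u) ≤ (h ∘ D.depth) u :=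
    hh (by rw [depth_parent]; omega)
  rw [leafPath, edges_append, edges_reverse, edges_copy, edges_copy, List.map_append,
    List.map_reverse, List.sum_append, List.sum_reverse, sum_heightDiff_parentWalk hpar,
    sum_heightDiff_parentWalk hpar, iterate_parent_leaf, iterate_parent_leaf]
  simp only [Function.comp_apply, leaf, depth_node _ le_rfl, D.meet_comm j i,
    depth_node _ (D.meet_le_meet_self _ _), depth_node _ (D.meet_le_meet_self' _ _)]
  ring

theorem sum_heightDiff_of_isPath [Finite ι] {h : ℕ → ℝ} (hh : Monotone h) {i j : ι}
    (p : D.tree.Walk (D.leaf i) (D.leaf j)) (hp : p.IsPath) :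
    (p.edges.map (heightDiff (h ∘ D.depth))).sum =
      h (D.meet i i) + h (D.meet j j) - 2 * h (D.meet i j) := by
  have : Nonempty ι := ⟨i⟩
  obtain rfl := (D.isTree_tree.existsUnique_path _ _).unique hp (D.isPath_leafPath i j)
  exact D.sum_leafPath hh i j

theorem exists_of_min_le {ι : Type*} [Finite ι] [Nonempty ι] (f : ι → ι → ℝ)
    (hf_comm : ∀ i j, f i j = f j i) (hf : ∀ i j k, min (f i k) (f j k) ≤ f i j) :
    ∃ (D : Dendrogram ι) (h : ℕ → ℝ), Monotone h ∧ ∀ i j, h (D.meet i j) = f i j := by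
  have := Fintype.ofFinite ι
  classical
  let s := Finset.univ.image fun p : ι × ι => f p.1 p.2
  have mem (i j : ι) : f i j ∈ s := Finset.mem_image_of_mem _ (Finset.mem_univ (i, j))
  obtain ⟨rank, h, hh, hrank, hval⟩ := s.exists_rank (Finset.univ_nonempty.image _)
  refine ⟨⟨fun i j => rank (f i j), fun i j => by rw [hf_comm], fun i j k => ?_⟩, h, hh,
    fun i j => hval _ (mem i j)⟩
  rcases min_le_iff.1 (hf i j k) with hle | hle
  · exact min_le_of_left_le (hrank (mem _ _) (mem _ _) hle)
  · exact min_le_of_right_le (hrank (mem _ _) (mem _ _) hle)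

end Dendrogram

section GromovProduct

variable {V : Type*} (d : V → V → ℝ)

noncomputable def gromovProduct (r i j : V) : ℝ := (d r i + d r j - d i j) / 2

variable {d}

lemma gromovProduct_comm (hsym : ∀ i j, d i j = d j i) (r i j : V) :
    gromovProduct d r i j = gromovProduct d r j i := by
  rw [gromovProduct, gromovProduct, hsym i j, add_comm (d r i)]

lemma gromovProduct_self (hdiag : ∀ i, d i i = 0) (r i : V) :
    gromovProduct d r i i = d r i := by
  rw [gromovProduct, hdiag]
  ring

lemma min_gromovProduct_le (hsym : ∀ i j, d i j = d j i)
    (h4 : ∀ i j k l, d i j + d k l ≤ max (d i k + d j l) (d i l + d j k)) (r i j k : V) :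
    min (gromovProduct d r i k) (gromovProduct d r j k) ≤ gromovProduct d r i j := by
  have := hsym r i
  have := hsym r j
  have := hsym r k
  rcases le_max_iff.1 (h4 i j k r) with h | h
  · exact min_le_of_left_le (by unfold gromovProduct; linarith)
  · exact min_le_of_right_le (by unfold gromovProduct; linarith)

end GromovProduct

def IsTreeMetric {V : Type*} (d : V → V → ℝ) : Prop :=
  ∃ (U : Type) (_ : Fintype U) (G : SimpleGraph U) (_ : G.IsTree)
    (ι : V ↪ U) (w : Sym2 U → ℝ),
    (∀ e ∈ G.edgeSet, 0 ≤ w e) ∧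
    ∀ (i j : V) (p : G.Walk (ι i) (ι j)), p.IsPath → d i j = (p.edges.map w).sum

namespace IsTreeMetric

variable {V W : Type*}

lemma of_isEmpty [IsEmpty V] (d : V → V → ℝ) : IsTreeMetric d :=
  ⟨PUnit, inferInstance, ⊥, .of_subsingleton, .ofIsEmpty, 0, fun _ _ => le_rfl, isEmptyElim⟩

lemma of_equiv {d : V → V → ℝ} (e : W ≃ V) (h : IsTreeMetric fun a b => d (e a) (e b)) :
    IsTreeMetric d := by
  obtain ⟨U, hU, G, hG, ι, w, hw, hd⟩ := h
  refine ⟨U, hU, G, hG, e.symm.toEmbedding.trans ι, w, hw, fun i j p hp => ?_⟩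
  have := hd (e.symm i) (e.symm j) p hp
  simp only [Equiv.apply_symm_apply] at this
  exact this

end IsTreeMetric

theorem isTreeMetric_of_four_point {V : Type} [Finite V] [Nonempty V] {d : V → V → ℝ}
    (hsym : ∀ i j, d i j = d j i) (hdiag : ∀ i, d i i = 0) (hpos : ∀ i j, i ≠ j → 0 < d i j)
    (h4 : ∀ i j k l, d i j + d k l ≤ max (d i k + d j l) (d i l + d j k)) :
    IsTreeMetric d := by
  obtain ⟨r⟩ := ‹Nonempty V›
  obtain ⟨D, h, hh, hD⟩ := Dendrogram.exists_of_min_le (gromovProduct d r)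
    (gromovProduct_comm hsym r) (min_gromovProduct_le hsym h4 r)
  have leaf_injective : Function.Injective D.leaf := by
    intro i j hij
    rw [Dendrogram.leaf, Dendrogram.leaf, D.node_eq_node_iff le_rfl le_rfl] at hij
    by_contra hne
    have hsame := congrArg h hij.1
    have hle := hh hij.2
    simp only [hD, gromovProduct_self hdiag] at hsame hle
    unfold gromovProduct at hle
    linarith [hpos i j hne]
  refine ⟨D.Node, Fintype.ofFinite _, D.tree, D.isTree_tree, ⟨D.leaf, leaf_injective⟩,
    heightDiff (h ∘ D.depth), fun e _ => heightDiff_nonneg _ e, fun i j p hp => ?_⟩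
  rw [D.sum_heightDiff_of_isPath hh p hp, hD, hD, hD, gromovProduct_self hdiag,
    gromovProduct_self hdiag, gromovProduct]
  ring

/-- Buneman's theorem (converse direction): a symmetric function `d` on a finite set `V`,
vanishing on the diagonal, positive off the diagonal, and satisfying the four-point
condition `max (d i k + d j l) (d i l + d j k) ≥ d i j + d k l` for all (not necessarily
distinct) `i j k l`, is a tree metric: there is a finite tree `G` on a vertex set `U`
containing `V` (via an embedding `ι`) with nonnegative edge lengths `w` such that
`d i j` is the sum of the lengths of the edges on the (unique) path from `ι i` to `ι j`. -/
theorem four_point_is_tree_metric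
    {V : Type*} [Fintype V] (d : V → V → ℝ)
    (hsym : ∀ i j : V, d i j = d j i)
    (hdiag : ∀ i : V, d i i = 0)
    (hpos : ∀ i j : V, i ≠ j → 0 < d i j)
    (h4 : ∀ i j k l : V, d i j + d k l ≤ max (d i k + d j l) (d i l + d j k)) :
    ∃ (U : Type) (_ : Fintype U) (G : SimpleGraph U) (_ : G.IsTree)
      (ι : V ↪ U) (w : Sym2 U → ℝ),
      (∀ e ∈ G.edgeSet, 0 ≤ w e) ∧
      ∀ (i j : V) (p : G.Walk (ι i) (ι j)), p.IsPath →
        d i j = (p.edges.map w).sum := by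
  show IsTreeMetric d
  rcases isEmpty_or_nonempty V with hV | hV
  · exact .of_isEmpty d
  · let e := (Fintype.equivFin V).symm
    have : Nonempty (Fin (Fintype.card V)) := e.nonempty
    exact .of_equiv e <| isTreeMetric_of_four_point (fun i j => hsym _ _) (fun i => hdiag _)
      (fun i j hij => hpos _ _ (e.injective.ne hij)) (fun i j k l => h4 _ _ _ _)
end

section
/- Let T = (U, E) be a finite tree with leaf set V ⊆ U, let ρ_e ∈ [0,1] be a weight assigned to each edge e ∈ E, and define ρ_{ij} = ∏_{e ∈ ph(i,j)} ρ_e for i, j ∈ V (an empty product being 1). Then for any four distinct leaves i, j, k, l ∈ V such that the edge sets ph(i,j) and ph(k,l) are disjoint, it holds that ρ_{ik} ρ_{jl} = ρ_{il} ρ_{jk} ≤ ρ_{ij} ρ_{kl}. -/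
/-! Deleting an edge `e` from a tree leaves at most two components, and `e` lies on the path
between `u` and `v` iff it separates them. Hence the path edge sets satisfy
`ph u v = ph w u ∆ ph w v`. For a quartet with `ph i j` and `ph k l` disjoint this gives
`ph i k ∪ ph j l = ph i l ∪ ph j k`, `ph i k ∩ ph j l = ph i l ∩ ph j k` and
`ph i j ∪ ph k l ⊆ ph i k ∪ ph j l`, and both claims follow from
`∏_A * ∏_B = ∏_(A ∪ B) * ∏_(A ∩ B)` with all weights in `[0, 1]`. -/

theorem Equivalence.iff_iff_of_forall_or {α : Type*} {r : α → α → Prop} (hr : Equivalence r)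
    {a b : α} (h : ∀ x, r x a ∨ r x b) (x y : α) : r x y ↔ (r x a ↔ r y a) := by
  refine ⟨fun hxy => ⟨hr.trans (hr.symm hxy), hr.trans hxy⟩, fun hxy => ?_⟩
  by_cases hxa : r x a
  · exact hr.trans hxa (hr.symm (hxy.mp hxa))
  · exact hr.trans ((h x).resolve_left hxa) (hr.symm ((h y).resolve_left (mt hxy.mpr hxa)))

namespace SimpleGraph

variable {V : Type*} {G : SimpleGraph V}

theorem IsAcyclic.mem_edges_iff_not_reachable_deleteEdges (hG : G.IsAcyclic) {u v : V}
    {p : G.Walk u v} (hp : p.IsPath) {e : Sym2 V} :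
    e ∈ p.edges ↔ ¬(G.deleteEdges {e}).Reachable u v := by
  classical
  refine ⟨fun he ⟨q⟩ => ?_, p.mem_edges_of_not_reachable_deleteEdges⟩
  have := hG.subsingleton_path u v
  have hpq : p = q.bypass.mapLe (G.deleteEdges_le {e}) :=
    congrArg Subtype.val (Subsingleton.elim (⟨p, hp⟩ : G.Path u v) ⟨_, q.bypass_isPath.mapLe _⟩)
  rw [hpq, Walk.edges_mapLe_eq_edges] at he
  simpa using q.bypass.edges_subset_edgeSet he

theorem Walk.reachable_deleteEdges_or {x a : V} (p : G.Walk x a) (b : V) :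
    (G.deleteEdges {s(a, b)}).Reachable x a ∨ (G.deleteEdges {s(a, b)}).Reachable x b := by
  induction p with
  | nil => exact .inl .rfl
  | @cons x y a hxy q ih =>
    by_cases he : s(x, y) = s(a, b)
    · rcases Sym2.eq_iff.mp he with ⟨rfl, -⟩ | ⟨rfl, -⟩
      · exact .inl .rfl
      · exact .inr .rfl
    · have : (G.deleteEdges {s(a, b)}).Adj x y := by simp [hxy, he]
      exact ih.imp this.reachable.trans this.reachable.trans

theorem Connected.reachable_deleteEdges_iff (hG : G.Connected) (e : Sym2 V) (u v w : V) :
    (G.deleteEdges {e}).Reachable u v ↔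
      ((G.deleteEdges {e}).Reachable w u ↔ (G.deleteEdges {e}).Reachable w v) := by
  induction e with | h a b =>
  have hR := (G.deleteEdges {s(a, b)}).reachable_is_equivalence
  have hside (x : V) := (hG.preconnected x a).some.reachable_deleteEdges_or b
  rw [hR.iff_iff_of_forall_or hside u v, hR.iff_iff_of_forall_or hside w u,
    hR.iff_iff_of_forall_or hside w v]
  tauto

theorem IsTree.eq_symmDiff_of_isPath [DecidableEq V] (hG : G.IsTree)
    {P : V → V → Finset (Sym2 V)}
    (hpath : ∀ u v, ∃ p : G.Walk u v, p.IsPath ∧ p.edges.toFinset = P u v) (u v w : V) :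
    P u v = symmDiff (P w u) (P w v) := by
  have hmem (x y : V) (e : Sym2 V) : e ∈ P x y ↔ ¬(G.deleteEdges {e}).Reachable x y := by
    obtain ⟨p, hp, hpP⟩ := hpath x y
    rw [← hpP, List.mem_toFinset, hG.isAcyclic.mem_edges_iff_not_reachable_deleteEdges hp]
  ext e
  rw [Finset.mem_symmDiff, hmem, hmem, hmem, hG.connected.reachable_deleteEdges_iff e u v w]
  tauto

end SimpleGraph

namespace Finset

variable {α β : Type*} [DecidableEq β] {P : α → α → Finset β} {i j k l : α}

theorem cross_union_eq_of_symmDiff (hP : ∀ u v w, P u v = symmDiff (P w u) (P w v))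
    (hdisj : Disjoint (P i j) (P k l)) :
    P i k ∪ P j l = P i l ∪ P j k := by
  rw [hP k l i, disjoint_left] at hdisj
  ext e
  have := @hdisj e
  simp only [hP j l i, hP j k i, mem_union, mem_symmDiff] at this ⊢
  tauto

theorem cross_inter_eq_of_symmDiff (hP : ∀ u v w, P u v = symmDiff (P w u) (P w v))
    (hdisj : Disjoint (P i j) (P k l)) :
    P i k ∩ P j l = P i l ∩ P j k := by
  rw [hP k l i, disjoint_left] at hdisj
  ext e
  have := @hdisj e
  simp only [hP j l i, hP j k i, mem_inter, mem_symmDiff] at this ⊢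
  tauto

theorem union_subset_cross_union_of_symmDiff (hP : ∀ u v w, P u v = symmDiff (P w u) (P w v))
    (hdisj : Disjoint (P i j) (P k l)) :
    P i j ∪ P k l ⊆ P i k ∪ P j l := by
  rw [hP k l i, disjoint_left] at hdisj
  intro e
  have := @hdisj e
  simp only [hP j l i, hP k l i, mem_union, mem_symmDiff] at this ⊢
  tauto

theorem prod_cross_eq_of_symmDiff (hP : ∀ u v w, P u v = symmDiff (P w u) (P w v))
    (hdisj : Disjoint (P i j) (P k l))
    {M : Type*} [CommMonoid M] (f : β → M) :
    (∏ e ∈ P i k, f e) * ∏ e ∈ P j l, f e = (∏ e ∈ P i l, f e) * ∏ e ∈ P j k, f e := by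
  rw [← prod_union_inter, cross_union_eq_of_symmDiff hP hdisj,
    cross_inter_eq_of_symmDiff hP hdisj, prod_union_inter]

theorem prod_cross_le_of_symmDiff (hP : ∀ u v w, P u v = symmDiff (P w u) (P w v))
    (hdisj : Disjoint (P i j) (P k l))
    {R : Type*} [CommMonoidWithZero R] [PartialOrder R]
    [ZeroLEOneClass R] [PosMulMono R] {f : β → R}
    (hf : ∀ u v, ∀ e ∈ P u v, 0 ≤ f e ∧ f e ≤ 1) :
    (∏ e ∈ P i k, f e) * ∏ e ∈ P j l, f e ≤ (∏ e ∈ P i j, f e) * ∏ e ∈ P k l, f e := by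
  have hf' : ∀ e ∈ P i k ∪ P j l, 0 ≤ f e ∧ f e ≤ 1 := by
    simp only [mem_union]
    rintro e (he | he) <;> exact hf _ _ e he
  calc (∏ e ∈ P i k, f e) * ∏ e ∈ P j l, f e
      = (∏ e ∈ P i k ∪ P j l, f e) * ∏ e ∈ P i k ∩ P j l, f e := prod_union_inter.symm
    _ ≤ ∏ e ∈ P i k ∪ P j l, f e :=
        mul_le_of_le_one_right (prod_nonneg fun e he => (hf' e he).1)
          (prod_le_one (fun e he => (hf _ _ e (mem_inter.mp he).1).1)
            (fun e he => (hf _ _ e (mem_inter.mp he).1).2))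
    _ ≤ ∏ e ∈ P i j ∪ P k l, f e :=
        prod_le_prod_of_subset_of_le_one (union_subset_cross_union_of_symmDiff hP hdisj)
          (fun e he => (hf' e he).1) (fun e he _ => (hf' e he).2)
    _ = (∏ e ∈ P i j, f e) * ∏ e ∈ P k l, f e := prod_union hdisj

end Finset

theorem orange_disjoint_quartet_general
    {U : Type*} [DecidableEq U]
    (G : SimpleGraph U) (hG : G.IsTree)
    (ρ : Sym2 U → ℝ) (hρ : ∀ e ∈ G.edgeSet, ρ e ∈ Set.Icc (0 : ℝ) 1)
    (ph : U → U → Finset (Sym2 U))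
    (hph : ∀ u v : U, ∃ p : G.Walk u v, p.IsPath ∧ p.edges.toFinset = ph u v)
    (r : U → U → ℝ) (hr : ∀ u v : U, r u v = ∏ e ∈ ph u v, ρ e)
    (i j k l : U)
    (hdisj : Disjoint (ph i j) (ph k l)) :
    r i k * r j l = r i l * r j k ∧ r i k * r j l ≤ r i j * r k l := by
  have hP := hG.eq_symmDiff_of_isPath hph
  have hρ' : ∀ u v, ∀ e ∈ ph u v, 0 ≤ ρ e ∧ ρ e ≤ 1 := by
    intro u v e he
    obtain ⟨p, -, hpP⟩ := hph u v
    exact hρ e (p.edges_subset_edgeSet (List.mem_toFinset.mp (hpP ▸ he)))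
  simp only [hr]
  exact ⟨Finset.prod_cross_eq_of_symmDiff hP hdisj ρ,
    Finset.prod_cross_le_of_symmDiff hP hdisj hρ'⟩

/-- For a finite tree `G` with leaf set `V` and edge weights `ρ e ∈ [0,1]`, the induced
leaf correlations `r u v = ∏_{e ∈ ph u v} ρ e` satisfy, for any four distinct leaves
`i j k l` whose connecting paths `ph i j` and `ph k l` are edge-disjoint,
`r i k * r j l = r i l * r j k ≤ r i j * r k l`. -/
theorem orange_disjoint_quartet
    {U : Type*} [Fintype U] [DecidableEq U]
    (G : SimpleGraph U) [DecidableRel G.Adj] (hG : G.IsTree)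
    (V : Finset U) (hV : ∀ v ∈ V, G.degree v = 1)
    (ρ : Sym2 U → ℝ) (hρ : ∀ e ∈ G.edgeSet, ρ e ∈ Set.Icc (0 : ℝ) 1)
    (ph : U → U → Finset (Sym2 U))
    (hph : ∀ u v : U, ∃ p : G.Walk u v, p.IsPath ∧ p.edges.toFinset = ph u v)
    (r : U → U → ℝ) (hr : ∀ u v : U, r u v = ∏ e ∈ ph u v, ρ e)
    (i j k l : U) (hi : i ∈ V) (hj : j ∈ V) (hk : k ∈ V) (hl : l ∈ V)
    (hij : i ≠ j) (hik : i ≠ k) (hil : i ≠ l) (hjk : j ≠ k) (hjl : j ≠ l) (hkl : k ≠ l)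
    (hdisj : Disjoint (ph i j) (ph k l)) :
    r i k * r j l = r i l * r j k ∧ r i k * r j l ≤ r i j * r k l :=
  orange_disjoint_quartet_general G hG ρ hρ ph hph r hr i j k l hdisj
end

section
/- Let T = (U, E) be a finite tree with leaf set V ⊆ U and let R = (ρ_{ij})_{i,j ∈ V} be a symmetric matrix with ρ_{ii} = 1 and ρ_{ij} ≠ 0 for all distinct i, j. Suppose that ρ_{ij} ρ_{ik} ρ_{jk} ≥ 0 for all distinct i, j, k ∈ V, and that there exist edge weights w_e ∈ [0,1], e ∈ E, with |ρ_{ij}| = ∏_{e ∈ ph(i,j)} w_e for all distinct i, j ∈ V. Then there exist edge weights ρ_e ∈ [−1,1], e ∈ E, such that ρ_{ij} = ∏_{e ∈ ph(i,j)} ρ_e for all distinct i, j ∈ V; that is, R belongs to the Gaussian latent tree model M(T). -/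
/-!
Choose a root leaf `i₀` and put `σ x = sign ρ i₀ x`. The triangle condition makes the signs
balanced: `ρ i j = σ i * σ j * |ρ i j|`. Extend `σ` by `1` to all vertices and multiply each edge
weight `w uv` by `σ u * σ v`. Along the path from `i` to `j` every inner vertex then contributes
`σ x ^ 2 = 1`, so the product over the path is `σ i * σ j * |ρ i j| = ρ i j`.
-/

section Signs

variable {α : Type*} [Ring α] [LinearOrder α] [IsStrictOrderedRing α]

theorem abs_sign_of_ne_zero {a : α} (ha : a ≠ 0) : |(SignType.sign a : α)| = 1 := by
  rcases ha.lt_or_gt with ha | ha <;> simp [sign_neg, sign_pos, ha]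

theorem eq_sign_mul_sign_mul_abs_of_nonneg_mul {a b c : α} (ha : a ≠ 0) (hb : b ≠ 0)
    (hc : c ≠ 0) (h : 0 ≤ a * b * c) : c = SignType.sign a * SignType.sign b * |c| := by
  have habc : SignType.sign a * SignType.sign b * SignType.sign c = 1 := by
    rw [← sign_mul, ← sign_mul]
    exact sign_pos (h.lt_of_ne (mul_ne_zero (mul_ne_zero ha hb) hc).symm)
  have hsc : SignType.sign c = SignType.sign a * SignType.sign b := by
    rw [← sign_ne_zero] at ha hb hc
    revert habc ha hb hc
    generalize SignType.sign a = x
    generalize SignType.sign b = y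
    generalize SignType.sign c = z
    decide +revert
  calc c = SignType.sign c * |c| := (sign_mul_abs c).symm
    _ = SignType.sign a * SignType.sign b * |c| := by rw [hsc, SignType.coe_mul]

theorem exists_sign_mul_sign_mul_abs {L : Type*} (ρ : L → L → α) (hsym : ∀ i j, ρ i j = ρ j i)
    (hdiag : ∀ i, ρ i i = 1) (hne : ∀ i j, i ≠ j → ρ i j ≠ 0)
    (htri : ∀ i j k, i ≠ j → i ≠ k → j ≠ k → 0 ≤ ρ i j * ρ i k * ρ j k) :
    ∃ σ : L → α, (∀ x, |σ x| = 1) ∧ ∀ i j, i ≠ j → ρ i j = σ i * σ j * |ρ i j| := by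
  rcases isEmpty_or_nonempty L with hL | ⟨⟨i₀⟩⟩
  · exact ⟨1, by simp, isEmptyElim⟩
  have hρ₀ : ∀ x, ρ i₀ x ≠ 0 := fun x ↦ by
    rcases eq_or_ne i₀ x with rfl | hx
    · simp [hdiag]
    · exact hne i₀ x hx
  have htri₀ : ∀ i j, i ≠ j → 0 ≤ ρ i₀ i * ρ i₀ j * ρ i j := fun i j hij ↦ by
    rcases eq_or_ne i₀ i with rfl | hi
    · simpa [hdiag] using mul_self_nonneg (ρ i₀ j)
    rcases eq_or_ne i₀ j with rfl | hj
    · simpa [hdiag, hsym i i₀] using mul_self_nonneg (ρ i₀ i)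
    exact htri i₀ i j hi hj hij
  exact ⟨fun x ↦ SignType.sign (ρ i₀ x), fun x ↦ abs_sign_of_ne_zero (hρ₀ x),
    fun i j hij ↦ eq_sign_mul_sign_mul_abs_of_nonneg_mul (hρ₀ i) (hρ₀ j) (hne i j hij)
      (htri₀ i j hij)⟩

end Signs

def Sym2.switching {V M : Type*} [CommMonoid M] (τ : V → M) : Sym2 V → M :=
  Sym2.lift ⟨fun u v ↦ τ u * τ v, fun _ _ ↦ mul_comm _ _⟩

@[simp]
theorem Sym2.switching_mk {V M : Type*} [CommMonoid M] (τ : V → M) (u v : V) :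
    Sym2.switching τ s(u, v) = τ u * τ v :=
  rfl

namespace SimpleGraph.Walk

variable {V M : Type*} {G : SimpleGraph V} [CommMonoid M] {τ : V → M}

theorem prod_map_switching (hτ : ∀ x, τ x * τ x = 1) :
    ∀ {u v : V} (p : G.Walk u v), (p.edges.map (Sym2.switching τ)).prod = τ u * τ v
  | u, _, nil => (hτ u).symm
  | u, v, cons (v := w) _ p => by
    rw [edges_cons, List.map_cons, List.prod_cons, prod_map_switching hτ p,
      Sym2.switching_mk, mul_assoc, ← mul_assoc (τ w), hτ, one_mul]

theorem IsPath.prod_switching [DecidableEq V] {u v : V} {p : G.Walk u v} (hp : p.IsPath)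
    (hτ : ∀ x, τ x * τ x = 1) : ∏ e ∈ p.edges.toFinset, Sym2.switching τ e = τ u * τ v := by
  rw [List.prod_toFinset _ hp.isTrail.edges_nodup, prod_map_switching hτ]

end SimpleGraph.Walk

theorem abs_orange_and_signs_mem_latent_tree_general
    {U L : Type*} [DecidableEq U]
    (G : SimpleGraph U)
    (ι : L ↪ U)
    (ph : U → U → Finset (Sym2 U))
    (hph : ∀ u v : U, ∃ p : G.Walk u v, p.IsPath ∧ p.edges.toFinset = ph u v)
    (ρ : L → L → ℝ)
    (hsym : ∀ i j : L, ρ i j = ρ j i)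
    (hdiag : ∀ i : L, ρ i i = 1)
    (hne : ∀ i j : L, i ≠ j → ρ i j ≠ 0)
    (htri : ∀ i j k : L, i ≠ j → i ≠ k → j ≠ k → 0 ≤ ρ i j * ρ i k * ρ j k)
    (w : Sym2 U → ℝ) (hw : ∀ e ∈ G.edgeSet, w e ∈ Set.Icc (0 : ℝ) 1)
    (habs : ∀ i j : L, i ≠ j → |ρ i j| = ∏ e ∈ ph (ι i) (ι j), w e) :
    ∃ ρe : Sym2 U → ℝ,
      (∀ e ∈ G.edgeSet, ρe e ∈ Set.Icc (-1 : ℝ) 1) ∧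
      ∀ i j : L, i ≠ j → ρ i j = ∏ e ∈ ph (ι i) (ι j), ρe e := by
  obtain ⟨σ, hσ, hρ⟩ := exists_sign_mul_sign_mul_abs ρ hsym hdiag hne htri
  obtain ⟨τ, hτ, hτι⟩ : ∃ τ : U → ℝ, (∀ x, |τ x| = 1) ∧ ∀ i, τ (ι i) = σ i := by
    refine ⟨Function.extend ι σ 1, fun x ↦ ?_, ι.injective.extend_apply σ 1⟩
    by_cases hx : ∃ i, ι i = x
    · obtain ⟨i, rfl⟩ := hx
      rw [ι.injective.extend_apply, hσ]
    · rw [Function.extend_apply' _ _ _ hx, Pi.one_apply, abs_one]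
  refine ⟨fun e ↦ w e * Sym2.switching τ e, fun e he ↦ ?_, fun i j hij ↦ ?_⟩
  · have hswitch : |Sym2.switching τ e| = 1 := by
      induction e using Sym2.ind with
      | h u v => rw [Sym2.switching_mk, abs_mul, hτ, hτ, one_mul]
    rw [Set.mem_Icc, ← abs_le, abs_mul, hswitch, mul_one, abs_of_nonneg (hw e he).1]
    exact (hw e he).2
  · obtain ⟨p, hp, hpe⟩ := hph (ι i) (ι j)
    rw [Finset.prod_mul_distrib, ← habs i j hij, ← hpe,
      hp.prod_switching fun x ↦ by rw [← abs_mul_abs_self, hτ, one_mul],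
      hτι, hτι, mul_comm]
    exact hρ i j hij

/-- Let `G` be a finite tree with leaf set given by the embedding `ι : L ↪ U`, and let
`ρ : L → L → ℝ` be symmetric with unit diagonal and no zero off-diagonal entries, such that
`ρ i j * ρ i k * ρ j k ≥ 0` for all distinct `i j k` and the absolute values have a
representation `|ρ i j| = ∏_{e ∈ ph (ι i) (ι j)} w e` with edge weights `w e ∈ [0,1]`.
Then there are edge weights `ρe ∈ [−1,1]` with `ρ i j = ∏_{e ∈ ph (ι i) (ι j)} ρe e`
for all distinct `i j`, i.e. `ρ` belongs to the Gaussian latent tree model `M(T)`. -/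
theorem abs_orange_and_signs_mem_latent_tree
    {U L : Type*} [Fintype U] [DecidableEq U] [Fintype L]
    (G : SimpleGraph U) [DecidableRel G.Adj] (hG : G.IsTree)
    (ι : L ↪ U) (hleaf : ∀ x : L, G.degree (ι x) = 1)
    (ph : U → U → Finset (Sym2 U))
    (hph : ∀ u v : U, ∃ p : G.Walk u v, p.IsPath ∧ p.edges.toFinset = ph u v)
    (ρ : L → L → ℝ)
    (hsym : ∀ i j : L, ρ i j = ρ j i)
    (hdiag : ∀ i : L, ρ i i = 1)
    (hne : ∀ i j : L, i ≠ j → ρ i j ≠ 0)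
    (htri : ∀ i j k : L, i ≠ j → i ≠ k → j ≠ k → 0 ≤ ρ i j * ρ i k * ρ j k)
    (w : Sym2 U → ℝ) (hw : ∀ e ∈ G.edgeSet, w e ∈ Set.Icc (0 : ℝ) 1)
    (habs : ∀ i j : L, i ≠ j → |ρ i j| = ∏ e ∈ ph (ι i) (ι j), w e) :
    ∃ ρe : Sym2 U → ℝ,
      (∀ e ∈ G.edgeSet, ρe e ∈ Set.Icc (-1 : ℝ) 1) ∧
      ∀ i j : L, i ≠ j → ρ i j = ∏ e ∈ ph (ι i) (ι j), ρe e :=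
  abs_orange_and_signs_mem_latent_tree_general G ι ph hph ρ hsym hdiag hne htri w hw habs
end

section
/- Let ρ₁₂, ρ₁₃, ρ₂₃ ∈ [−1,1]. Then there exist a, b, c ∈ [−1,1] with ρ₁₂ = ab, ρ₁₃ = ac, and ρ₂₃ = bc if and only if the following four conditions hold: ρ₁₂ ρ₁₃ ρ₂₃ ≥ 0, |ρ₁₂ ρ₁₃| ≤ |ρ₂₃|, |ρ₁₂ ρ₂₃| ≤ |ρ₁₃|, and |ρ₁₃ ρ₂₃| ≤ |ρ₁₂|. -/
/-!
Since `(ab)(ac)(bc) = (abc)²` and `|(ab)(ac)| = a²|bc|`, the conditions are necessary.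
Conversely, if all three correlations are nonzero the edge correlations are determined up to
sign by `a² = ρ12 ρ13 / ρ23`, `b² = ρ12 ρ23 / ρ13`, `c² = ρ13 ρ23 / ρ12`: the sign condition
makes these positive and the three inequalities bound them by `1`. If one correlation vanishes,
the inequalities force a second one to vanish, and the remaining one sits on a single path.
-/

lemma abs_sq_mul_le_abs {x : ℝ} (hx : |x| ≤ 1) (y : ℝ) : |x ^ 2 * y| ≤ |y| := by
  rw [abs_mul, abs_pow]
  exact mul_le_of_le_one_left (abs_nonneg y) (pow_le_one₀ (abs_nonneg x) hx)

lemma div_le_one_of_abs_mul_le_abs {x y z : ℝ} (hz : z ≠ 0) (h : |x * y| ≤ |z|) :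
    x * y / z ≤ 1 :=
  calc x * y / z ≤ |x * y / z| := le_abs_self _
    _ = |x * y| / |z| := abs_div _ _
    _ ≤ 1 := (div_le_one (abs_pos.mpr hz)).mpr h

lemma tripod_constraints_of_abs_le_one {a b c : ℝ} (ha : |a| ≤ 1) (hb : |b| ≤ 1)
    (hc : |c| ≤ 1) :
    0 ≤ a * b * (a * c) * (b * c) ∧ |a * b * (a * c)| ≤ |b * c| ∧
      |a * b * (b * c)| ≤ |a * c| ∧ |a * c * (b * c)| ≤ |a * b| := by
  refine ⟨?_, ?_, ?_, ?_⟩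
  · rw [show a * b * (a * c) * (b * c) = (a * b * c) ^ 2 by ring]
    positivity
  · rw [show a * b * (a * c) = a ^ 2 * (b * c) by ring]
    exact abs_sq_mul_le_abs ha _
  · rw [show a * b * (b * c) = b ^ 2 * (a * c) by ring]
    exact abs_sq_mul_le_abs hb _
  · rw [show a * c * (b * c) = c ^ 2 * (a * b) by ring]
    exact abs_sq_mul_le_abs hc _

lemma exists_tripod_params_of_ne_zero {ρ12 ρ13 ρ23 : ℝ} (e12 : ρ12 ≠ 0) (e13 : ρ13 ≠ 0)
    (e23 : ρ23 ≠ 0) (hp : 0 ≤ ρ12 * ρ13 * ρ23) (h1 : |ρ12 * ρ13| ≤ |ρ23|)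
    (h2 : |ρ12 * ρ23| ≤ |ρ13|) (h3 : |ρ13 * ρ23| ≤ |ρ12|) :
    ∃ a b c : ℝ, |a| ≤ 1 ∧ |b| ≤ 1 ∧ |c| ≤ 1 ∧ ρ12 = a * b ∧ ρ13 = a * c ∧ ρ23 = b * c := by
  set t := ρ12 * ρ13 / ρ23 with ht_def
  have ht : 0 < t := by
    have hp' : 0 < ρ12 * ρ13 * ρ23 := hp.lt_of_ne (by positivity)
    rw [ht_def, ← mul_div_mul_right _ _ e23, ← sq]
    positivity
  set a := √t
  have ha : a ^ 2 = t := Real.sq_sqrt ht.le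
  have ha0 : a ≠ 0 := (Real.sqrt_pos.mpr ht).ne'
  refine ⟨a, ρ12 / a, ρ13 / a, ?_, ?_, ?_, ?_, ?_, ?_⟩
  · rw [← sq_le_one_iff_abs_le_one, ha]
    exact div_le_one_of_abs_mul_le_abs e23 h1
  · rw [← sq_le_one_iff_abs_le_one, div_pow, ha,
      show ρ12 ^ 2 / t = ρ12 * ρ23 / ρ13 by rw [ht_def]; field_simp]
    exact div_le_one_of_abs_mul_le_abs e13 h2
  · rw [← sq_le_one_iff_abs_le_one, div_pow, ha,
      show ρ13 ^ 2 / t = ρ13 * ρ23 / ρ12 by rw [ht_def]; field_simp]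
    exact div_le_one_of_abs_mul_le_abs e12 h3
  · field_simp
  · field_simp
  · rw [div_mul_div_comm, ← sq, ha, ht_def]
    field_simp

/-- Semialgebraic description of the Gaussian latent tree model of the tripod tree:
numbers `ρ12, ρ13, ρ23 ∈ [−1,1]` are products `ρ12 = a*b`, `ρ13 = a*c`, `ρ23 = b*c` of
edge correlations `a, b, c ∈ [−1,1]` if and only if `ρ12*ρ13*ρ23 ≥ 0`,
`|ρ12*ρ13| ≤ |ρ23|`, `|ρ12*ρ23| ≤ |ρ13|`, and `|ρ13*ρ23| ≤ |ρ12|`. -/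
theorem tripod_semialgebraic_description
    (ρ12 ρ13 ρ23 : ℝ)
    (h12 : ρ12 ∈ Set.Icc (-1 : ℝ) 1) (h13 : ρ13 ∈ Set.Icc (-1 : ℝ) 1)
    (h23 : ρ23 ∈ Set.Icc (-1 : ℝ) 1) :
    (∃ a b c : ℝ, a ∈ Set.Icc (-1 : ℝ) 1 ∧ b ∈ Set.Icc (-1 : ℝ) 1 ∧
        c ∈ Set.Icc (-1 : ℝ) 1 ∧ ρ12 = a * b ∧ ρ13 = a * c ∧ ρ23 = b * c) ↔
    (0 ≤ ρ12 * ρ13 * ρ23 ∧ |ρ12 * ρ13| ≤ |ρ23| ∧ |ρ12 * ρ23| ≤ |ρ13| ∧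
      |ρ13 * ρ23| ≤ |ρ12|) := by
  have one_mem : (1 : ℝ) ∈ Set.Icc (-1 : ℝ) 1 := by norm_num
  have zero_mem : (0 : ℝ) ∈ Set.Icc (-1 : ℝ) 1 := by norm_num
  constructor
  · rintro ⟨a, b, c, ha, hb, hc, rfl, rfl, rfl⟩
    exact tripod_constraints_of_abs_le_one (abs_le.mpr ha) (abs_le.mpr hb) (abs_le.mpr hc)
  rintro ⟨hp, h1, h2, h3⟩
  rcases eq_or_ne ρ12 0 with rfl | e12
  · rw [abs_zero, abs_nonpos_iff, mul_eq_zero] at h3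
    rcases h3 with rfl | rfl
    · exact ⟨0, 1, ρ23, zero_mem, one_mem, h23, by simp, by simp, by simp⟩
    · exact ⟨ρ13, 0, 1, h13, zero_mem, one_mem, by simp, by simp, by simp⟩
  rcases eq_or_ne ρ13 0 with rfl | e13
  · rw [abs_zero, abs_nonpos_iff, mul_eq_zero] at h2
    obtain rfl : ρ23 = 0 := h2.resolve_left e12
    exact ⟨ρ12, 1, 0, h12, one_mem, zero_mem, by simp, by simp, by simp⟩
  have e23 : ρ23 ≠ 0 := by
    rintro rfl
    rw [abs_zero, abs_nonpos_iff] at h1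
    exact mul_ne_zero e12 e13 h1
  obtain ⟨a, b, c, ha, hb, hc, rfl, rfl, rfl⟩ :=
    exists_tripod_params_of_ne_zero e12 e13 e23 hp h1 h2 h3
  exact ⟨a, b, c, abs_le.mp ha, abs_le.mp hb, abs_le.mp hc, rfl, rfl, rfl⟩
end

section
/- Let M = {(x,y,z) ∈ [−1,1]³ : xyz ≥ 0, |xy| ≤ |z|, |xz| ≤ |y|, |yz| ≤ |x|} and let E = {(x,y,z) ∈ ℝ³ : the matrix [[1,x,y],[x,1,z],[y,z,1]] is positive definite}. Then the Lebesgue volume of M equals (2/π²) times the Lebesgue volume of E; equivalently, vol(M)/vol(E) = 2/π². -/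
/-!
Both volumes are computed by slicing along the third coordinate.

The correlation matrix with off-diagonal entries `x, y, z` is positive definite iff
`|x|, |y| < 1` and `(z - xy)² < (1 - x²)(1 - y²)` (its determinant is the difference of the two
sides), so the `z`-slice of `E` is an interval of length `2 √(1 - x²) √(1 - y²)` and
`vol E = 2 (∫₋₁¹ √(1 - t²) dt)² = π² / 2`.

For `x, y ≠ 0` the box constraints of `M` follow from the other three, and the `z`-slice of `M`
is the set of `z` of the sign of `xy` with `|x| |y| ≤ |z| ≤ min (|x| / |y|) (|y| / |x|)`.
By symmetry in the signs, `vol M = 4 ∫₀¹ ∫₀¹ (min (a / b) (b / a) - ab)⁺ db da`; the inner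
integral is `-a log a`, whose integral over `[0, 1]` is `1 / 4`, so `vol M = 1`.
-/

open MeasureTheory Real Set
open scoped ENNReal Matrix

theorem MeasureTheory.Measure.prod_prod_apply {α β γ : Type*} [MeasurableSpace α]
    [MeasurableSpace β] [MeasurableSpace γ] {μ : Measure α} {ν : Measure β} {ρ : Measure γ}
    [SFinite ν] [SFinite ρ] {s : Set (α × β × γ)} (hs : MeasurableSet s) :
    μ.prod (ν.prod ρ) s = ∫⁻ x, ∫⁻ y, ρ {z | (x, y, z) ∈ s} ∂ν ∂μ := by
  rw [Measure.prod_apply hs]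
  exact lintegral_congr fun x => Measure.prod_apply (measurable_prodMk_left hs)

theorem lintegral_comp_abs (f : ℝ → ℝ≥0∞) : ∫⁻ x, f |x| = 2 * ∫⁻ x in Ioi 0, f x := by
  have hpos : ∫⁻ x in Ioi 0, f |x| = ∫⁻ x in Ioi 0, f x :=
    setLIntegral_congr_fun measurableSet_Ioi fun x hx => by rw [abs_of_pos hx]
  have hneg : ∫⁻ x in Iic 0, f |x| = ∫⁻ x in Ioi 0, f |x| := by
    rw [setLIntegral_congr Ioi_ae_eq_Ici]
    simpa using (Measure.measurePreserving_neg volume).setLIntegral_comp_preimage_emb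
      (Homeomorph.neg ℝ).measurableEmbedding (fun x => f |x|) (Ici 0)
  rw [← lintegral_add_compl _ measurableSet_Ioi, compl_Ioi, hneg, hpos, two_mul]

theorem ofReal_intervalIntegral_eq_setLIntegral_ofReal {f : ℝ → ℝ} {a b : ℝ} (hab : a ≤ b)
    (hf : ContinuousOn f (Icc a b)) (hf₀ : ∀ x ∈ Ioc a b, 0 ≤ f x) :
    ENNReal.ofReal (∫ x in a..b, f x) = ∫⁻ x in Ioc a b, ENNReal.ofReal (f x) := by
  rw [intervalIntegral.integral_of_le hab, ofReal_integral_eq_lintegral_ofReal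
    (hf.integrableOn_Icc.mono_set Ioc_subset_Icc_self)
    ((ae_restrict_iff' measurableSet_Ioc).2 (ae_of_all _ hf₀))]

theorem setLIntegral_Ioi_eq_Ioc {f : ℝ → ℝ≥0∞} {a c : ℝ} (hac : a ≤ c)
    (hf : ∀ x ∈ Ioi c, f x = 0) : ∫⁻ x in Ioi a, f x = ∫⁻ x in Ioc a c, f x := by
  rw [← Ioc_union_Ioi_eq_Ioi hac, lintegral_union measurableSet_Ioi (Ioc_disjoint_Ioi le_rfl),
    setLIntegral_congr_fun measurableSet_Ioi hf, lintegral_zero, add_zero]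

theorem volume_setOf_nonneg_mul_and_abs_mem_Icc {c lo hi : ℝ} (hc : c ≠ 0) (hlo : 0 ≤ lo) :
    volume {z : ℝ | 0 ≤ c * z ∧ |z| ∈ Icc lo hi} = ENNReal.ofReal (hi - lo) := by
  wlog hc₀ : 0 < c generalizing c
  · rw [← this (neg_ne_zero.2 hc) (neg_pos.2 (hc.lt_of_le (not_lt.1 hc₀))),
      ← Measure.measure_neg]
    congr 1
    ext z
    simp only [mem_neg, mem_ofPred_eq, abs_neg, mul_neg, neg_mul]
  have hIcc : {z : ℝ | 0 ≤ c * z ∧ |z| ∈ Icc lo hi} = Icc lo hi := by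
    ext z
    rw [mem_ofPred_eq, mul_nonneg_iff_of_pos_left hc₀]
    constructor
    · rintro ⟨hz, h⟩
      rwa [abs_of_nonneg hz] at h
    · intro h
      have hz := hlo.trans h.1
      rw [abs_of_nonneg hz]
      exact ⟨hz, h⟩
  rw [hIcc, Real.volume_Icc]

theorem integral_mul_log_zero_one : ∫ x in (0 : ℝ)..1, x * log x = -(1 / 4) := by
  have hderiv (x : ℝ) (hx : x ∈ Ioo (0 : ℝ) 1) :
      HasDerivAt (fun s => s / 2 * (s * log s) - s ^ 2 / 4) (x * log x) x := by
    refine ((((hasDerivAt_id' x).div_const 2).mul (hasDerivAt_mul_log hx.1.ne')).sub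
      ((hasDerivAt_pow 2 x).div_const 4)).congr_deriv ?_
    push_cast
    ring
  rw [intervalIntegral.integral_eq_sub_of_hasDeriv_right_of_le zero_le_one
    (by fun_prop) (fun x hx => (hderiv x hx).hasDerivWithinAt)
    (continuous_mul_log.intervalIntegrable 0 1)]
  norm_num

def corrMatrix (x y z : ℝ) : Matrix (Fin 3) (Fin 3) ℝ :=
  Matrix.of ![![1, x, y], ![x, 1, z], ![y, z, 1]]

theorem posDef_corrMatrix_iff (x y z : ℝ) :
    (corrMatrix x y z).PosDef ↔
      x ^ 2 < 1 ∧ y ^ 2 < 1 ∧ (z - x * y) ^ 2 < (1 - x ^ 2) * (1 - y ^ 2) := by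
  constructor
  · intro h
    have hdet := h.det_pos
    have hx := h.dotProduct_mulVec_pos (x := ![1, -x, 0])
      (by simp [funext_iff, Fin.forall_fin_succ])
    have hy := h.dotProduct_mulVec_pos (x := ![1, 0, -y])
      (by simp [funext_iff, Fin.forall_fin_succ])
    simp [corrMatrix, Matrix.det_fin_three, dotProduct, Matrix.mulVec, Fin.sum_univ_three]
      at hdet hx hy
    refine ⟨by nlinarith, by nlinarith, by nlinarith⟩
  · rintro ⟨hx, hy, hz⟩
    refine Matrix.posDef_iff_dotProduct_mulVec.mpr ⟨?_, fun v hv => ?_⟩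
    · ext i j
      fin_cases i <;> fin_cases j <;> rfl
    have hquad : (1 - x ^ 2) * (star v ⬝ᵥ corrMatrix x y z *ᵥ v) =
        (1 - x ^ 2) * (v 0 + x * v 1 + y * v 2) ^ 2 + ((1 - x ^ 2) * v 1 + (z - x * y) * v 2) ^ 2
          + ((1 - x ^ 2) * (1 - y ^ 2) - (z - x * y) ^ 2) * v 2 ^ 2 := by
      simp [corrMatrix, dotProduct, Matrix.mulVec, Fin.sum_univ_three]
      ring
    have hx' : 0 < 1 - x ^ 2 := sub_pos.2 hx
    have hD : 0 < (1 - x ^ 2) * (1 - y ^ 2) - (z - x * y) ^ 2 := sub_pos.2 hz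
    refine pos_of_mul_pos_right (hquad ▸ ?_) hx'.le
    rcases eq_or_ne (v 2) 0 with h2 | h2
    · rcases eq_or_ne (v 1) 0 with h1 | h1
      · have h0 : v 0 ≠ 0 := fun h0 => hv (by ext i; fin_cases i <;> simp [h0, h1, h2])
        simp only [h1, h2, mul_zero, add_zero, zero_pow two_ne_zero]
        positivity
      · simp only [h2, mul_zero, add_zero, zero_pow two_ne_zero]
        positivity
    · positivity

def elliptope : Set (ℝ × ℝ × ℝ) := {p | (corrMatrix p.1 p.2.1 p.2.2).PosDef}

theorem mem_elliptope {x y z : ℝ} :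
    (x, y, z) ∈ elliptope ↔
      x ^ 2 < 1 ∧ y ^ 2 < 1 ∧ (z - x * y) ^ 2 < (1 - x ^ 2) * (1 - y ^ 2) :=
  posDef_corrMatrix_iff x y z

theorem measurableSet_elliptope : MeasurableSet elliptope := by
  simp only [elliptope, posDef_corrMatrix_iff, ofPred_and]
  exact (measurableSet_lt (by fun_prop) (by fun_prop)).inter
    ((measurableSet_lt (by fun_prop) (by fun_prop)).inter
      (measurableSet_lt (by fun_prop) (by fun_prop)))

noncomputable def semicircle : ℝ → ℝ≥0∞ :=
  (Ioo (-1) 1).indicator fun t => ENNReal.ofReal √(1 - t ^ 2)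

theorem measurable_semicircle : Measurable semicircle :=
  (by fun_prop : Measurable fun t : ℝ => ENNReal.ofReal √(1 - t ^ 2)).indicator measurableSet_Ioo

theorem lintegral_semicircle : ∫⁻ t, semicircle t = ENNReal.ofReal (π / 2) := by
  rw [semicircle, lintegral_indicator measurableSet_Ioo, setLIntegral_congr Ioo_ae_eq_Ioc,
    ← integral_sqrt_one_sub_sq, ofReal_intervalIntegral_eq_setLIntegral_ofReal (by norm_num)
      (by fun_prop) fun t _ => sqrt_nonneg _]

theorem volume_slice_elliptope (x y : ℝ) :
    volume {z | (x, y, z) ∈ elliptope} = 2 * semicircle x * semicircle y := by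
  have hI (t : ℝ) : t ∈ Ioo (-1) 1 ↔ t ^ 2 < 1 := by
    rw [mem_Ioo, ← abs_lt, sq_lt_one_iff_abs_lt_one]
  simp only [mem_elliptope]
  by_cases hxy : x ^ 2 < 1 ∧ y ^ 2 < 1
  · obtain ⟨hx, hy⟩ := hxy
    have hball : {z | x ^ 2 < 1 ∧ y ^ 2 < 1 ∧ (z - x * y) ^ 2 < (1 - x ^ 2) * (1 - y ^ 2)} =
        Metric.ball (x * y) (√(1 - x ^ 2) * √(1 - y ^ 2)) := by
      ext z
      rw [mem_ofPred_eq, Metric.mem_ball, Real.dist_eq, ← sqrt_mul (by linarith),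
        lt_sqrt (abs_nonneg _), sq_abs]
      exact ⟨fun h => h.2.2, fun h => ⟨hx, hy, h⟩⟩
    rw [hball, Real.volume_ball, semicircle, indicator_of_mem ((hI x).2 hx),
      indicator_of_mem ((hI y).2 hy), ← ENNReal.ofReal_ofNat 2, ← ENNReal.ofReal_mul zero_le_two,
      ← ENNReal.ofReal_mul (by positivity), mul_assoc]
  · have hempty :
        {z | x ^ 2 < 1 ∧ y ^ 2 < 1 ∧ (z - x * y) ^ 2 < (1 - x ^ 2) * (1 - y ^ 2)} = ∅ :=
      eq_empty_of_forall_notMem fun z hz => hxy ⟨hz.1, hz.2.1⟩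
    rw [hempty, measure_empty]
    rcases not_and_or.1 hxy with hx | hy
    · simp [semicircle, indicator_of_notMem (mt (hI x).1 hx)]
    · simp [semicircle, indicator_of_notMem (mt (hI y).1 hy)]

theorem volume_elliptope : volume elliptope = ENNReal.ofReal (π ^ 2 / 2) := by
  rw [Measure.volume_eq_prod, Measure.volume_eq_prod,
    Measure.prod_prod_apply measurableSet_elliptope]
  simp_rw [volume_slice_elliptope, lintegral_const_mul _ measurable_semicircle,
    lintegral_semicircle]
  rw [lintegral_mul_const _ (measurable_semicircle.const_mul 2),
    lintegral_const_mul _ measurable_semicircle, lintegral_semicircle, ← ENNReal.ofReal_ofNat 2,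
    ← ENNReal.ofReal_mul zero_le_two, ← ENNReal.ofReal_mul (by positivity)]
  ring_nf

def tripodModel : Set (ℝ × ℝ × ℝ) :=
  {p | p.1 ∈ Icc (-1 : ℝ) 1 ∧ p.2.1 ∈ Icc (-1 : ℝ) 1 ∧ p.2.2 ∈ Icc (-1 : ℝ) 1 ∧
    0 ≤ p.1 * p.2.1 * p.2.2 ∧ |p.1 * p.2.1| ≤ |p.2.2| ∧
    |p.1 * p.2.2| ≤ |p.2.1| ∧ |p.2.1 * p.2.2| ≤ |p.1|}

theorem measurableSet_tripodModel : MeasurableSet tripodModel := by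
  simp only [tripodModel, ofPred_and]
  measurability

theorem mem_tripodModel_iff {x y z : ℝ} (hx : x ≠ 0) (hy : y ≠ 0) :
    (x, y, z) ∈ tripodModel ↔
      0 ≤ x * y * z ∧ |x * y| ≤ |z| ∧ |x * z| ≤ |y| ∧ |y * z| ≤ |x| := by
  refine ⟨fun h => h.2.2.2, ?_⟩
  rintro ⟨h₀, hxy, hxz, hyz⟩
  have ha := abs_pos.2 hx
  have hb := abs_pos.2 hy
  have hx₁ : |x| ≤ 1 := by
    rw [abs_mul] at hxy hxz
    nlinarith [mul_le_mul_of_nonneg_left hxy ha.le, mul_pos ha hb]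
  have hy₁ : |y| ≤ 1 := by
    rw [abs_mul] at hxy hyz
    nlinarith [mul_le_mul_of_nonneg_left hxy hb.le, mul_pos ha hb]
  have hz₁ : |z| ≤ 1 := by
    rw [abs_mul] at hxz hyz
    nlinarith [mul_le_mul hxz hyz (by positivity) hb.le, mul_pos ha hb]
  exact ⟨abs_le.1 hx₁, abs_le.1 hy₁, abs_le.1 hz₁, h₀, hxy, hxz, hyz⟩

/-- Only the positive part is a length: for `a, b > 0` this is negative once `max a b > 1`,
where the fibre is empty. -/
noncomputable def tripodFiberLength (a b : ℝ) : ℝ := min (a / b) (b / a) - a * b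

theorem volume_slice_tripodModel {x y : ℝ} (hx : x ≠ 0) (hy : y ≠ 0) :
    volume {z | (x, y, z) ∈ tripodModel} = ENNReal.ofReal (tripodFiberLength |x| |y|) := by
  have hslice : {z | (x, y, z) ∈ tripodModel} =
      {z | 0 ≤ x * y * z ∧ |z| ∈ Icc (|x| * |y|) (min (|x| / |y|) (|y| / |x|))} := by
    ext z
    simp only [mem_ofPred_eq, mem_tripodModel_iff hx hy, mem_Icc, le_min_iff, abs_mul,
      le_div_iff₀ (abs_pos.2 hx), le_div_iff₀ (abs_pos.2 hy), mul_comm |z|]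
    tauto
  rw [hslice, volume_setOf_nonneg_mul_and_abs_mem_Icc (mul_ne_zero hx hy) (by positivity),
    tripodFiberLength]

theorem tripodFiberLength_comm (a b : ℝ) : tripodFiberLength a b = tripodFiberLength b a := by
  rw [tripodFiberLength, tripodFiberLength, min_comm, mul_comm]

theorem tripodFiberLength_nonpos_of_one_le {a b : ℝ} (ha : 0 ≤ a) (hb : 1 ≤ b) :
    tripodFiberLength a b ≤ 0 := by
  have : a / b ≤ a * b := div_le_of_le_mul₀ (by linarith) (by positivity)
    (by nlinarith [mul_nonneg (mul_nonneg ha (sub_nonneg.2 hb)) (by linarith : 0 ≤ b + 1)])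
  rw [tripodFiberLength]
  linarith [min_le_left (a / b) (b / a)]

theorem integral_id_div_sub_const_mul (a : ℝ) :
    ∫ b in (0 : ℝ)..a, (b / a - a * b) = a / 2 - a ^ 3 / 2 := by
  simp_rw [div_eq_inv_mul, ← sub_mul]
  rw [intervalIntegral.integral_const_mul, integral_id]
  rcases eq_or_ne a 0 with rfl | ha
  · simp
  · field_simp
    ring

theorem integral_const_div_sub_const_mul {a : ℝ} (ha : 0 < a) :
    ∫ b in a..1, (a / b - a * b) = -(a * log a) - (a / 2 - a ^ 3 / 2) := by
  simp_rw [div_eq_mul_inv]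
  rw [intervalIntegral.integral_sub, intervalIntegral.integral_const_mul,
    intervalIntegral.integral_const_mul, integral_inv_of_pos ha one_pos, integral_id,
    log_div one_ne_zero ha.ne', log_one]
  · ring
  · exact (intervalIntegral.intervalIntegrable_inv
      (fun b hb => ((lt_min ha one_pos).trans_le hb.1).ne') continuousOn_id).const_mul a
  · exact (continuous_const_mul a).intervalIntegrable a 1

theorem lintegral_tripodFiberLength {a : ℝ} (ha : 0 < a) (ha₁ : a ≤ 1) :
    ∫⁻ b in Ioi 0, ENNReal.ofReal (tripodFiberLength a b) = ENNReal.ofReal (-(a * log a)) := by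
  have hsmall : EqOn (tripodFiberLength a) (fun b => b / a - a * b) (Ioc 0 a) := fun b hb => by
    rw [tripodFiberLength,
      min_eq_right ((div_le_div_iff₀ ha hb.1).2 (mul_self_le_mul_self hb.1.le hb.2))]
  have hlarge : EqOn (tripodFiberLength a) (fun b => a / b - a * b) (Ioc a 1) := fun b hb => by
    have hb₀ := ha.trans hb.1
    rw [tripodFiberLength, min_eq_left ((div_le_div_iff₀ hb₀ ha).2 (by nlinarith [hb.1]))]
  have hsmall₀ : ∀ b ∈ Icc 0 a, 0 ≤ b / a - a * b := fun b hb => by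
    have : a * b * a ≤ b := by nlinarith [mul_le_mul ha₁ ha₁ ha.le zero_le_one, hb.1]
    linarith [(le_div_iff₀ ha).2 this]
  have hlarge₀ : ∀ b ∈ Icc a 1, 0 ≤ a / b - a * b := fun b hb => by
    have hb₀ := ha.trans_le hb.1
    have : a * b * b ≤ a := by nlinarith [mul_le_mul hb.2 hb.2 hb₀.le zero_le_one]
    linarith [(le_div_iff₀ hb₀).2 this]
  rw [setLIntegral_Ioi_eq_Ioc zero_le_one fun b hb =>
      ENNReal.ofReal_eq_zero.2 (tripodFiberLength_nonpos_of_one_le ha.le hb.le),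
    ← Ioc_union_Ioc_eq_Ioc ha.le ha₁,
    lintegral_union measurableSet_Ioc (Ioc_disjoint_Ioc_of_le le_rfl),
    setLIntegral_congr_fun measurableSet_Ioc fun b hb => congrArg ENNReal.ofReal (hsmall hb),
    setLIntegral_congr_fun measurableSet_Ioc fun b hb => congrArg ENNReal.ofReal (hlarge hb),
    ← ofReal_intervalIntegral_eq_setLIntegral_ofReal ha.le (by fun_prop)
      fun b hb => hsmall₀ b (Ioc_subset_Icc_self hb),
    ← ofReal_intervalIntegral_eq_setLIntegral_ofReal (f := fun b => a / b - a * b) ha₁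
      ((continuousOn_const.div continuousOn_id fun b hb => (ha.trans_le hb.1).ne').sub
        (by fun_prop)) fun b hb => hlarge₀ b (Ioc_subset_Icc_self hb),
    ← ENNReal.ofReal_add (intervalIntegral.integral_nonneg ha.le hsmall₀)
      (intervalIntegral.integral_nonneg ha₁ hlarge₀),
    integral_id_div_sub_const_mul, integral_const_div_sub_const_mul ha]
  ring_nf

theorem lintegral_lintegral_tripodFiberLength :
    ∫⁻ a in Ioi 0, ∫⁻ b in Ioi 0, ENNReal.ofReal (tripodFiberLength a b) =
      ENNReal.ofReal (1 / 4) := by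
  have hlarge (a : ℝ) (ha : a ∈ Ioi 1) :
      ∫⁻ b in Ioi 0, ENNReal.ofReal (tripodFiberLength a b) = 0 :=
    (setLIntegral_congr_fun measurableSet_Ioi fun b hb => ENNReal.ofReal_eq_zero.2 <|
      (tripodFiberLength_comm a b).trans_le
        (tripodFiberLength_nonpos_of_one_le hb.le ha.le)).trans lintegral_zero
  rw [setLIntegral_Ioi_eq_Ioc zero_le_one hlarge,
    setLIntegral_congr_fun measurableSet_Ioc fun a ha => lintegral_tripodFiberLength ha.1 ha.2,
    ← ofReal_intervalIntegral_eq_setLIntegral_ofReal (f := fun a => -(a * log a)) zero_le_one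
      continuous_mul_log.neg.continuousOn
      fun a ha => neg_nonneg.2 (mul_log_nonpos ha.1.le ha.2),
    intervalIntegral.integral_neg, integral_mul_log_zero_one, neg_neg]

theorem volume_tripodModel : volume tripodModel = 1 := by
  have hslices : ∀ᵐ x : ℝ, ∫⁻ y, volume {z | (x, y, z) ∈ tripodModel} =
      2 * ∫⁻ b in Ioi 0, ENNReal.ofReal (tripodFiberLength |x| b) := by
    filter_upwards [Measure.ae_ne volume 0] with x hx
    rw [← lintegral_comp_abs fun b => ENNReal.ofReal (tripodFiberLength |x| b)]
    exact lintegral_congr_ae <| by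
      filter_upwards [Measure.ae_ne volume 0] with y hy using volume_slice_tripodModel hx hy
  rw [Measure.volume_eq_prod, Measure.volume_eq_prod,
    Measure.prod_prod_apply measurableSet_tripodModel, lintegral_congr_ae hslices,
    lintegral_const_mul' _ _ ENNReal.ofNat_ne_top,
    lintegral_comp_abs fun a => ∫⁻ b in Ioi 0, ENNReal.ofReal (tripodFiberLength a b),
    lintegral_lintegral_tripodFiberLength, ← mul_assoc,
    show (2 : ℝ≥0∞) * 2 = ENNReal.ofReal 4 by norm_num, ← ENNReal.ofReal_mul zero_le_four]
  norm_num

/-- The Lebesgue volume of the correlation space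
`M = {(x,y,z) ∈ [−1,1]³ : xyz ≥ 0, |xy| ≤ |z|, |xz| ≤ |y|, |yz| ≤ |x|}` of the tripod
latent tree model equals `2/π²` times the Lebesgue volume of the elliptope
`E` of 3×3 positive definite correlation matrices. -/
theorem tripod_model_volume_ratio :
    volume {p : ℝ × ℝ × ℝ |
        p.1 ∈ Set.Icc (-1 : ℝ) 1 ∧ p.2.1 ∈ Set.Icc (-1 : ℝ) 1 ∧
        p.2.2 ∈ Set.Icc (-1 : ℝ) 1 ∧
        0 ≤ p.1 * p.2.1 * p.2.2 ∧ |p.1 * p.2.1| ≤ |p.2.2| ∧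
        |p.1 * p.2.2| ≤ |p.2.1| ∧ |p.2.1 * p.2.2| ≤ |p.1|} =
    ENNReal.ofReal (2 / Real.pi ^ 2) *
      volume {p : ℝ × ℝ × ℝ |
        (Matrix.of ![![1, p.1, p.2.1], ![p.1, 1, p.2.2], ![p.2.1, p.2.2, 1]]).PosDef} := by
  change volume tripodModel = ENNReal.ofReal (2 / π ^ 2) * volume elliptope
  rw [volume_tripodModel, volume_elliptope, ← ENNReal.ofReal_mul (by positivity),
    div_mul_div_cancel₀ (by positivity), div_self two_ne_zero, ENNReal.ofReal_one]
end

section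
/- Let U be a finite set with a distinguished root r ∈ U and a parent map pa : U → U with pa(r) = r, such that the simple graph G on U whose edges are {v, pa(v)} for v ≠ r is a tree. Let (Ω, F, P) be a probability space and let (ε_v)_{v ∈ U} be mutually independent real random variables, each square-integrable with mean zero. Given real coefficients (λ_v)_{v ∈ U}, define Z_r = ε_r and Z_v = λ_v Z_{pa(v)} + ε_v for v ≠ r. Then for any two vertices u, v ∈ U, if u = w_0, w_1, …, w_k = v is the unique path in G from u to v, the covariances satisfy Cov(Z_u, Z_v) · ∏_{t=1}^{k−1} Var(Z_{w_t}) = ∏_{t=1}^{k} Cov(Z_{w_{t−1}}, Z_{w_t}). In particular, when all variances are nonzero, the correlation matrix of (Z_v) satisfies the path-product constraint ρ_{uv} = ∏_{e ∈ ph(u,v)} ρ_e of the Gaussian latent tree model on G. -/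
/-!
Along a path `a, x, …, c` the covariances factor at `x`:
`Cov(Z a, Z c) Var(Z x) = Cov(Z a, Z x) Cov(Z x, Z c)`. If `x = pa a`, then
`Z a = lam a * Z x + ε a`, and `ε a` is uncorrelated with `Z x` and `Z c`, neither of which has `a`
as an ancestor. If `a = pa x`, then `c` lies below `x`; unrolling the recursion from `c` up to `x`
gives `Z c = L * Z x + (noise strictly below x)`, and that noise is uncorrelated with `Z x` and
`Z a`. Induction along the path turns this three-point identity into the product formula, and
dividing by standard deviations gives the correlation version.
-/

open MeasureTheory ProbabilityTheory

noncomputable def covar {Ω : Type*} [MeasurableSpace Ω] (μ : MeasureTheory.Measure Ω)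
    (f g : Ω → ℝ) : ℝ :=
  ∫ ω, (f ω - ∫ x, f x ∂μ) * (g ω - ∫ x, g x ∂μ) ∂μ

section Ancestor

variable {U : Type*} {pa : U → U} {r w x y : U}

variable (pa) in
/-- `IsAncestor pa w y`: `w` lies on the parent chain `y, pa y, pa (pa y), …`. -/
def IsAncestor (w y : U) : Prop := ∃ k, pa^[k] y = w

theorem isAncestor_refl (w : U) : IsAncestor pa w w := ⟨0, rfl⟩

theorem IsAncestor.of_parent (h : IsAncestor pa w (pa y)) : IsAncestor pa w y :=
  let ⟨k, hk⟩ := h; ⟨k + 1, hk⟩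

theorem isAncestor_iff_of_parent_eq (hxy : pa x = y) (hx : x ≠ w) :
    IsAncestor pa w x ↔ IsAncestor pa w y := by
  refine ⟨fun ⟨k, hk⟩ => ?_, fun h => (hxy ▸ h).of_parent⟩
  cases k with
  | zero => exact absurd hk hx
  | succ k => exact ⟨k, hxy ▸ hk⟩

@[elab_as_elim]
theorem IsAncestor.induction_on_root {P : U → Prop} (root : P r)
    (step : ∀ y, y ≠ r → P (pa y) → P y) (hy : IsAncestor pa r y) : P y := by
  obtain ⟨k, hk⟩ := hy
  induction k generalizing y with
  | zero =>
    obtain rfl : y = r := hk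
    exact root
  | succ k ih =>
    by_cases hyr : y = r
    · exact hyr ▸ root
    · exact step y hyr (ih hk)

/-- Once the root is reached the parent chain stays there, so the only cycle is the loop at `r`. -/
theorem not_isAncestor_iterate (hpar : pa r = r) (hy : IsAncestor pa r y) (hyr : y ≠ r) {t : ℕ}
    (ht : 0 < t) : ¬ IsAncestor pa y (pa^[t] y) := by
  rintro ⟨m, hm⟩
  obtain ⟨k, hk⟩ := hy
  have hper : Function.IsPeriodicPt pa (m + t) y := by
    rw [Function.IsPeriodicPt, Function.IsFixedPt, Function.iterate_add_apply, hm]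
  apply hyr
  calc y = pa^[(m + t) * k] y := (hper.mul_const k).eq.symm
    _ = pa^[(m + t) * k - k] (pa^[k] y) := by
        rw [← Function.iterate_add_apply,
          Nat.sub_add_cancel (Nat.le_mul_of_pos_left k (by omega))]
    _ = r := by rw [hk, Function.iterate_fixed hpar]

variable {G : SimpleGraph U}

theorem isAncestor_iff_of_walk (hadj : ∀ a b, G.Adj a b → pa a = b ∨ pa b = a)
    {b c : U} (q : G.Walk b c) (hq : s(w, pa w) ∉ q.edges) :
    IsAncestor pa w b ↔ IsAncestor pa w c := by
  induction q with
  | nil => rfl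
  | @cons b y c h q ih =>
    rw [SimpleGraph.Walk.edges_cons, List.mem_cons, not_or] at hq
    refine Iff.trans ?_ (ih hq.2)
    rcases hadj b y h with hby | hyb
    · exact isAncestor_iff_of_parent_eq hby (by rintro rfl; exact hq.1 (by rw [hby]))
    · refine (isAncestor_iff_of_parent_eq hyb ?_).symm
      rintro rfl
      exact hq.1 (by rw [hyb, Sym2.eq_swap])

theorem isAncestor_root (hpar : pa r = r) (hadj : ∀ a b, G.Adj a b → pa a = b ∨ pa b = a)
    (hconn : G.Connected) (y : U) : IsAncestor pa r y :=
  (isAncestor_iff_of_walk hadj (hconn.preconnected y r).some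
    (by rw [hpar]; exact fun h => G.irrefl ((hconn.preconnected y r).some.adj_of_mem_edges h))).2
    (isAncestor_refl r)

end Ancestor

theorem SimpleGraph.Walk.IsPath.mul_prod_eq_prod_zip {U M : Type*} [CommMonoid M]
    {G : SimpleGraph U} (C : U → U → M) (V : U → M)
    (hstep : ∀ a x c, G.Adj a x → ∀ q : G.Walk x c, a ∉ q.support →
      C a c * V x = C a x * C x c)
    {u v : U} {p : G.Walk u v} (hp : p.IsPath) (huv : u ≠ v) :
    C u v * (p.support.tail.dropLast.map V).prod =
      ((p.support.zip p.support.tail).map fun e => C e.1 e.2).prod := by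
  induction p with
  | nil => exact absurd rfl huv
  | @cons a x c h q ih =>
    rw [SimpleGraph.Walk.cons_isPath_iff] at hp
    cases q with
    | nil => simp
    | @cons _ y _ h' q' =>
      have hxc : x ≠ c := by
        rintro rfl
        exact ((SimpleGraph.Walk.cons_isPath_iff _ _).1 hp.1).2 q'.end_mem_support
      have ih := ih hp.1 hxc
      obtain ⟨l, hl⟩ : ∃ l, q'.support = y :: l := ⟨_, q'.cons_tail_support.symm⟩
      simp only [SimpleGraph.Walk.support_cons, List.tail_cons, List.zip_cons_cons, List.map_cons,
        List.prod_cons, hl, List.dropLast_cons_cons] at ih ⊢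
      rw [← ih, ← mul_assoc, ← mul_assoc, ← hstep a x c h _ hp.2]

section StructuralEquations

variable {U Ω : Type*} [MeasurableSpace Ω] {μ : Measure Ω} {r : U} {pa : U → U}
  {ε : U → Ω → ℝ} {lam : U → ℝ} {Z : U → Ω → ℝ}

variable (μ r pa ε lam Z) in
structure IsLinearSEM : Prop where
  indep : iIndepFun ε μ
  memLp_noise : ∀ v, MemLp (ε v) 2 μ
  eq_root : Z r = ε r
  eq_parent : ∀ v, v ≠ r → Z v = fun ω => lam v * Z (pa v) ω + ε v ω

namespace IsLinearSEM

theorem memLp (h : IsLinearSEM μ r pa ε lam Z) (hroot : ∀ y, IsAncestor pa r y) (y : U) :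
    MemLp (Z y) 2 μ := by
  refine (hroot y).induction_on_root (h.eq_root ▸ h.memLp_noise r) fun y hy hpa => ?_
  rw [h.eq_parent y hy]
  exact (hpa.const_mul (lam y)).add (h.memLp_noise y)

variable [IsProbabilityMeasure μ]

theorem covariance_eq_parent (h : IsLinearSEM μ r pa ε lam Z)
    (hroot : ∀ y, IsAncestor pa r y) {X : Ω → ℝ} (hX : MemLp X 2 μ) {v : U} (hv : v ≠ r) :
    cov[X, Z v; μ] = lam v * cov[X, Z (pa v); μ] + cov[X, ε v; μ] := by
  rw [h.eq_parent v hv, ← covariance_const_mul_right]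
  exact covariance_add_right hX ((h.memLp hroot (pa v)).const_mul _) (h.memLp_noise v)

theorem covariance_noise_eq_zero (h : IsLinearSEM μ r pa ε lam Z)
    (hroot : ∀ y, IsAncestor pa r y) {w y : U} (hwy : ¬ IsAncestor pa w y) :
    cov[ε w, Z y; μ] = 0 := by
  refine (hroot y).induction_on_root
    (P := fun y => ∀ w, ¬ IsAncestor pa w y → cov[ε w, Z y; μ] = 0)
    (fun w hw => ?_) (fun y hy ih w hw => ?_) w hwy
  · have hwr : w ≠ r := by rintro rfl; exact hw (isAncestor_refl w)
    rw [h.eq_root]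
    exact (h.indep.indepFun hwr).covariance_eq_zero (h.memLp_noise w) (h.memLp_noise r)
  · have hwy : w ≠ y := by rintro rfl; exact hw (isAncestor_refl w)
    rw [h.covariance_eq_parent hroot (h.memLp_noise w) hy, ih w fun hpa => hw hpa.of_parent,
      (h.indep.indepFun hwy).covariance_eq_zero (h.memLp_noise w) (h.memLp_noise y)]
    ring

theorem covariance_eq_lam_mul (h : IsLinearSEM μ r pa ε lam Z)
    (hroot : ∀ y, IsAncestor pa r y) {v z : U} (hv : v ≠ r) (hvz : ¬ IsAncestor pa v z) :
    cov[Z v, Z z; μ] = lam v * cov[Z (pa v), Z z; μ] := by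
  rw [covariance_comm, h.covariance_eq_parent hroot (h.memLp hroot z) hv, covariance_comm,
    covariance_comm (Z z), h.covariance_noise_eq_zero hroot hvz, add_zero]

theorem covariance_eq_prod_mul_iterate (h : IsLinearSEM μ r pa ε lam Z)
    (hroot : ∀ y, IsAncestor pa r y) {z : U} (t : ℕ) {y : U}
    (hchain : ∀ k < t, pa^[k] y ≠ r ∧ ¬ IsAncestor pa (pa^[k] y) z) :
    cov[Z y, Z z; μ] = (∏ k ∈ Finset.range t, lam (pa^[k] y)) * cov[Z (pa^[t] y), Z z; μ] := by
  induction t generalizing y with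
  | zero => simp
  | succ t ih =>
    obtain ⟨hy, hyz⟩ : y ≠ r ∧ ¬ IsAncestor pa y z := hchain 0 t.succ_pos
    rw [h.covariance_eq_lam_mul hroot hy hyz,
      ih fun k hk => hchain (k + 1) (Nat.succ_lt_succ hk), Finset.prod_range_succ']
    simp only [Function.iterate_succ_apply, Function.iterate_zero_apply]
    ring

/-- Unrolling the recursion from `s` up to `x` makes both covariances of `Z s` equal to
`∏ lam` times the corresponding covariances of `Z x`. -/
theorem covariance_mul_variance_of_iterate (h : IsLinearSEM μ r pa ε lam Z) (hpar : pa r = r)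
    (hroot : ∀ y, IsAncestor pa r y) {s o x : U} {t : ℕ} (hx : pa^[t] s = x)
    (hchain : ∀ k < t, pa^[k] s ≠ r ∧ ¬ IsAncestor pa (pa^[k] s) o) :
    cov[Z s, Z o; μ] * Var[Z x; μ] = cov[Z s, Z x; μ] * cov[Z x, Z o; μ] := by
  have hchain_x : ∀ k < t, pa^[k] s ≠ r ∧ ¬ IsAncestor pa (pa^[k] s) x := fun k hk => by
    refine ⟨(hchain k hk).1, ?_⟩
    have := not_isAncestor_iterate hpar (hroot _) (hchain k hk).1 (Nat.sub_pos_of_lt hk)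
    rwa [← Function.iterate_add_apply, Nat.sub_add_cancel hk.le, hx] at this
  rw [h.covariance_eq_prod_mul_iterate hroot t hchain,
    h.covariance_eq_prod_mul_iterate hroot t hchain_x, hx,
    covariance_self (h.memLp hroot x).aemeasurable]
  ring

theorem covariance_mul_variance_of_adj (h : IsLinearSEM μ r pa ε lam Z) (hpar : pa r = r)
    (hroot : ∀ y, IsAncestor pa r y) {G : SimpleGraph U}
    (hadj : ∀ a b, G.Adj a b → pa a = b ∨ pa b = a) {a x c : U} (hax : G.Adj a x)
    (q : G.Walk x c) (ha : a ∉ q.support) :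
    cov[Z a, Z c; μ] * Var[Z x; μ] = cov[Z a, Z x; μ] * cov[Z x, Z c; μ] := by
  rcases hadj a x hax with rfl | hxa
  · have har : a ≠ r := by rintro rfl; exact hax.ne hpar.symm
    have hac : ¬ IsAncestor pa a c := by
      rw [← isAncestor_iff_of_walk hadj q fun he => ha (q.fst_mem_support_of_mem_edges he)]
      exact not_isAncestor_iterate (t := 1) hpar (hroot a) har one_pos
    exact h.covariance_mul_variance_of_iterate hpar hroot (t := 1) rfl
      fun k hk => by
        obtain rfl : k = 0 := by omega
        exact ⟨har, hac⟩
  · have hxr : x ≠ r := by rintro rfl; exact hax.ne (hxa ▸ hpar)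
    obtain ⟨t, hct⟩ : IsAncestor pa x c :=
      (isAncestor_iff_of_walk hadj q fun he => ha (hxa ▸ q.snd_mem_support_of_mem_edges he)).1
        (isAncestor_refl x)
    have hchain : ∀ k < t, pa^[k] c ≠ r ∧ ¬ IsAncestor pa (pa^[k] c) a := fun k hk => by
      have hcx : pa^[t - k] (pa^[k] c) = x := by
        rw [← Function.iterate_add_apply, Nat.sub_add_cancel hk.le, hct]
      have hkr : pa^[k] c ≠ r := by
        rintro hkr
        rw [hkr, Function.iterate_fixed hpar] at hcx
        exact hxr hcx.symm
      refine ⟨hkr, fun hka => ?_⟩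
      exact not_isAncestor_iterate hpar (hroot _) hkr (Nat.sub_pos_of_lt hk)
        (hcx ▸ (hxa ▸ hka).of_parent)
    have := h.covariance_mul_variance_of_iterate hpar hroot hct hchain
    rw [covariance_comm (Z c), covariance_comm (Z c), covariance_comm (Z x) (Z a)] at this
    linear_combination this

end IsLinearSEM

end StructuralEquations

theorem div_sqrt_mul_sqrt_eq_mul_div {a b c u v w : ℝ} (hv : 0 < v) (h : a * v = b * c) :
    a / (√u * √w) * 1 = b / (√u * √v) * (c / (√v * √w)) := by
  calc a / (√u * √w) * 1 = a * v / (√u * √w * v) := by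
        rw [mul_one, mul_div_mul_right _ _ hv.ne']
    _ = b * c / (√u * √w * (√v * √v)) := by rw [h, Real.mul_self_sqrt hv.le]
    _ = b / (√u * √v) * (c / (√v * √w)) := by ring

theorem rooted_tree_linear_model_path_product_general
    {U : Type*} (r : U) (pa : U → U) (hpar : pa r = r)
    (G : SimpleGraph U) (hGdef : G = SimpleGraph.fromRel (fun a b => a ≠ r ∧ pa a = b))
    (hG : G.IsTree)
    {Ω : Type*} [MeasurableSpace Ω] (μ : MeasureTheory.Measure Ω)
    [MeasureTheory.IsProbabilityMeasure μ]
    (ε : U → Ω → ℝ)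
    (hindep : ProbabilityTheory.iIndepFun ε μ)
    (hL2 : ∀ v : U, MeasureTheory.MemLp (ε v) 2 μ)
    (lam : U → ℝ) (Z : U → Ω → ℝ)
    (hZr : Z r = ε r)
    (hZ : ∀ v : U, v ≠ r → Z v = fun ω => lam v * Z (pa v) ω + ε v ω)
    (u v : U) (huv : u ≠ v) (p : G.Walk u v) (hp : p.IsPath) :
    covar μ (Z u) (Z v) *
        (p.support.tail.dropLast.map (fun w => variance (Z w) μ)).prod =
      ((p.support.zip p.support.tail).map (fun q => covar μ (Z q.1) (Z q.2))).prod ∧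
    ((∀ w : U, variance (Z w) μ ≠ 0) →
      covar μ (Z u) (Z v) /
          (Real.sqrt (variance (Z u) μ) * Real.sqrt (variance (Z v) μ)) =
        ((p.support.zip p.support.tail).map (fun q =>
          covar μ (Z q.1) (Z q.2) /
            (Real.sqrt (variance (Z q.1) μ) * Real.sqrt (variance (Z q.2) μ)))).prod) := by
  have hadj : ∀ a b, G.Adj a b → pa a = b ∨ pa b = a := by
    subst hGdef
    rintro a b ⟨-, ⟨-, hab⟩ | ⟨-, hba⟩⟩
    exacts [.inl hab, .inr hba]
  have hsem : IsLinearSEM μ r pa ε lam Z := ⟨hindep, hL2, hZr, hZ⟩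
  have hstep (a x c : U) (hax : G.Adj a x) (q : G.Walk x c) (ha : a ∉ q.support) :
      covar μ (Z a) (Z c) * variance (Z x) μ = covar μ (Z a) (Z x) * covar μ (Z x) (Z c) :=
    hsem.covariance_mul_variance_of_adj hpar (isAncestor_root hpar hadj hG.connected) hadj hax q ha
  refine ⟨hp.mul_prod_eq_prod_zip (fun a b => covar μ (Z a) (Z b)) (fun w => variance (Z w) μ)
    hstep huv, fun hvar => ?_⟩
  have hpos (x : U) : 0 < variance (Z x) μ := (variance_nonneg _ _).lt_of_ne (hvar x).symm
  simpa using hp.mul_prod_eq_prod_zip (fun a b => covar μ (Z a) (Z b) /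
      (Real.sqrt (variance (Z a) μ) * Real.sqrt (variance (Z b) μ))) (fun _ => 1)
    (fun a x c hax q ha => div_sqrt_mul_sqrt_eq_mul_div (hpos x) (hstep a x c hax q ha)) huv

/-- Recursive linear structural equations on a rooted tree: let `pa` be the parent map of a
rooted tree on a finite vertex set `U` with root `r`, let `(ε v)` be mutually independent
square-integrable mean-zero random variables, and define `Z r = ε r` and
`Z v = λ v * Z (pa v) + ε v` for `v ≠ r`. Then for any two distinct vertices `u v` and the
unique path `u = w₀, w₁, …, w_k = v` in the associated tree,
`Cov(Z u, Z v) * ∏_{t=1}^{k−1} Var(Z w_t) = ∏_{t=1}^{k} Cov(Z w_{t−1}, Z w_t)`; in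
particular, when all variances are nonzero, the correlation of `Z u` and `Z v` is the
product of the correlations along the edges of the path. -/
theorem rooted_tree_linear_model_path_product
    {U : Type*} [Fintype U] [DecidableEq U] (r : U) (pa : U → U) (hpar : pa r = r)
    (G : SimpleGraph U) (hGdef : G = SimpleGraph.fromRel (fun a b => a ≠ r ∧ pa a = b))
    (hG : G.IsTree)
    {Ω : Type*} [MeasurableSpace Ω] (μ : MeasureTheory.Measure Ω)
    [MeasureTheory.IsProbabilityMeasure μ]
    (ε : U → Ω → ℝ)
    (hindep : ProbabilityTheory.iIndepFun ε μ)
    (hL2 : ∀ v : U, MeasureTheory.MemLp (ε v) 2 μ)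
    (hmean : ∀ v : U, ∫ ω, ε v ω ∂μ = 0)
    (lam : U → ℝ) (Z : U → Ω → ℝ)
    (hZr : Z r = ε r)
    (hZ : ∀ v : U, v ≠ r → Z v = fun ω => lam v * Z (pa v) ω + ε v ω)
    (u v : U) (huv : u ≠ v) (p : G.Walk u v) (hp : p.IsPath) :
    covar μ (Z u) (Z v) *
        (p.support.tail.dropLast.map (fun w => variance (Z w) μ)).prod =
      ((p.support.zip p.support.tail).map (fun q => covar μ (Z q.1) (Z q.2))).prod ∧
    ((∀ w : U, variance (Z w) μ ≠ 0) →
      covar μ (Z u) (Z v) /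
          (Real.sqrt (variance (Z u) μ) * Real.sqrt (variance (Z v) μ)) =
        ((p.support.zip p.support.tail).map (fun q =>
          covar μ (Z q.1) (Z q.2) /
            (Real.sqrt (variance (Z q.1) μ) * Real.sqrt (variance (Z q.2) μ)))).prod) :=
  rooted_tree_linear_model_path_product_general r pa hpar G hGdef hG μ ε hindep hL2 lam Z hZr hZ u v
    huv p hp
end

section
/- Let n, m ≥ 2, let X be an m×n random matrix whose entries are independent standard normal N(0,1) random variables, and set W = XXᵀ. Let I, J, K, L be two-element subsets of {1,…,m}. If the symmetric differences satisfy I Δ J ≠ K Δ L, then Cov(det W_{I,J}, det W_{K,L}) = 0. -/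
open MeasureTheory ProbabilityTheory Matrix

/-- The joint law of the entries of an `m × n` random matrix with independent standard
normal `N(0,1)` entries: the product of `n*m` copies of the standard Gaussian measure. -/
noncomputable def stdGaussianMatrixMeasure (m n : ℕ) :
    MeasureTheory.Measure ((Fin m × Fin n) → ℝ) :=
  MeasureTheory.Measure.pi fun _ => ProbabilityTheory.gaussianReal 0 1

/-- `det M_{I,J}` for `I = {a,b}` and `J = {c,d}`: the determinant of the `2 × 2`
submatrix of `M` with rows `{a,b}` and columns `{c,d}`, indices taken in increasing
order. -/
def sminor {m : ℕ} (M : Matrix (Fin m) (Fin m) ℝ) (a b c d : Fin m) : ℝ :=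
  M (min a b) (min c d) * M (max a b) (max c d) -
    M (min a b) (max c d) * M (max a b) (min c d)

lemma covar_comm' {Ω : Type*} [MeasurableSpace Ω] (μ : MeasureTheory.Measure Ω)
    (f g : Ω → ℝ) : covar μ f g = covar μ g f := by
  unfold covar
  congr 1
  ext ω
  ring

lemma covar_zero_of_flip {Ω : Type*} [MeasurableSpace Ω] (μ : MeasureTheory.Measure Ω)
    (e : Ω ≃ᵐ Ω) (he : MeasurePreserving e μ μ) (f g : Ω → ℝ)
    (hf : ∀ ω, f (e ω) = -f ω) (hg : ∀ ω, g (e ω) = g ω) :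
    covar μ f g = 0 := by
  have key : ∀ (h : Ω → ℝ), (∀ ω, h (e ω) = - h ω) → ∫ ω, h ω ∂μ = 0 := by
    intro h hh
    have h1 : ∫ ω, h ω ∂μ = ∫ ω, h (e ω) ∂μ := by
      conv_lhs => rw [← he.map_eq]
      exact MeasureTheory.integral_map_equiv e h
    have h2 : ∫ ω, h (e ω) ∂μ = - ∫ ω, h ω ∂μ := by
      simp_rw [hh]
      exact integral_neg _
    linarith
  have hIf : ∫ ω, f ω ∂μ = 0 := key f hf
  unfold covar
  rw [hIf]
  exact key _ (fun ω => by rw [hg ω, hf ω]; ring)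

lemma sign_prod_aux {m : ℕ} (r a b c d : Fin m) (hab : a ≠ b) (hcd : c ≠ d) :
    (if a = r then (-1:ℝ) else 1) * (if b = r then -1 else 1) * (if c = r then -1 else 1) *
      (if d = r then -1 else 1) =
    if r ∈ symmDiff ({a, b} : Finset (Fin m)) {c, d} then -1 else 1 := by
  have hmem : (r ∈ symmDiff ({a, b} : Finset (Fin m)) {c, d}) ↔
      (((r = a ∨ r = b) ∧ ¬(r = c ∨ r = d)) ∨ ((r = c ∨ r = d) ∧ ¬(r = a ∨ r = b))) := by
    simp [Finset.mem_symmDiff]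
  simp only [hmem]
  by_cases ha : a = r <;> by_cases hb : b = r <;> by_cases hc : c = r <;>
    by_cases hd : d = r <;> simp_all [eq_comm] <;> norm_num

/-- Block-diagonality of the covariance of 2-minors of a standard Wishart matrix
`W = XXᵀ`: if the symmetric differences `I Δ J` and `K Δ L` of the two-element index sets
`I = {i₁,j₁}`, `J = {k₁,l₁}`, `K = {i₂,j₂}`, `L = {k₂,l₂}` differ, then
`Cov(det W_{I,J}, det W_{K,L}) = 0`. -/
theorem cov_minors_wishart_eq_zero_of_symmDiff_ne
    {m n : ℕ} (hm : 2 ≤ m) (hn : 2 ≤ n)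
    (X : ((Fin m × Fin n) → ℝ) → Matrix (Fin m) (Fin n) ℝ)
    (hX : ∀ ω, X ω = Matrix.of fun i t => ω (i, t))
    (W : ((Fin m × Fin n) → ℝ) → Matrix (Fin m) (Fin m) ℝ)
    (hW : ∀ ω, W ω = X ω * (X ω)ᵀ)
    (i₁ j₁ k₁ l₁ i₂ j₂ k₂ l₂ : Fin m)
    (h₁ : i₁ < j₁) (h₂ : k₁ < l₁) (h₃ : i₂ < j₂) (h₄ : k₂ < l₂)
    (hΔ : symmDiff ({i₁, j₁} : Finset (Fin m)) {k₁, l₁} ≠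
          symmDiff ({i₂, j₂} : Finset (Fin m)) {k₂, l₂}) :
    covar (stdGaussianMatrixMeasure m n)
        (fun ω => sminor (W ω) i₁ j₁ k₁ l₁)
        (fun ω => sminor (W ω) i₂ j₂ k₂ l₂) = 0 := by
  -- pick r in exactly one of the two symmetric differences
  rw [ne_eq, Finset.ext_iff, not_forall] at hΔ
  obtain ⟨r, hr⟩ := hΔ
  -- the sign function
  set s : Fin m → ℝ := fun a => if a = r then -1 else 1 with hs
  have hs2 : ∀ a, s a * s a = 1 := by
    intro a; simp only [hs]; split <;> norm_num
  -- the flip map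
  have hTinv : Function.Involutive (fun (ω : (Fin m × Fin n) → ℝ) (p : Fin m × Fin n) =>
      s p.1 * ω p) := by
    intro ω
    funext p
    simp only [← mul_assoc, hs2, one_mul]
  have hTmeas : Measurable (fun (ω : (Fin m × Fin n) → ℝ) (p : Fin m × Fin n) =>
      s p.1 * ω p) :=
    measurable_pi_lambda _ fun p => (measurable_pi_apply p).const_mul _
  set e : ((Fin m × Fin n) → ℝ) ≃ᵐ ((Fin m × Fin n) → ℝ) :=
    ⟨hTinv.toPerm _, hTmeas, hTmeas⟩ with he_def
  have he : MeasurePreserving e (stdGaussianMatrixMeasure m n) (stdGaussianMatrixMeasure m n) := by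
    have := measurePreserving_pi (fun _ : Fin m × Fin n => gaussianReal 0 1)
      (fun _ : Fin m × Fin n => gaussianReal 0 1)
      (f := fun p (x : ℝ) => s p.1 * x) (fun p => ?_)
    · exact this
    · constructor
      · exact measurable_id.const_mul _
      · rw [gaussianReal_map_const_mul]
        have h1 : s p.1 * 0 = 0 := mul_zero _
        have h2 : s p.1 ^ 2 = 1 := by
          have := hs2 p.1; nlinarith
        rw [h1]
        congr 1
        rw [mul_one]
        ext
        simp [h2]
  have heapp : ∀ ω p, e ω p = s p.1 * ω p := fun ω p => rfl
  -- matrix entries of W at flipped point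
  have hWe : ∀ ω a b, W (e ω) a b = s a * s b * W ω a b := by
    intro ω a b
    simp only [hW, hX, Matrix.mul_apply, Matrix.transpose_apply, Matrix.of_apply]
    rw [Finset.mul_sum]
    refine Finset.sum_congr rfl fun t _ => ?_
    rw [heapp, heapp]
    ring
  -- sminor transform
  have hsm : ∀ ω (a b c d : Fin m), a < b → c < d →
      sminor (W (e ω)) a b c d = (s a * s b * s c * s d) * sminor (W ω) a b c d := by
    intro ω a b c d hab hcd
    unfold sminor
    rw [min_eq_left hab.le, max_eq_right hab.le, min_eq_left hcd.le, max_eq_right hcd.le,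
      hWe, hWe, hWe, hWe]
    ring
  -- sign value from symmDiff membership
  have hsign : ∀ (a b c d : Fin m), a ≠ b → c ≠ d →
      s a * s b * s c * s d =
        (if r ∈ symmDiff ({a, b} : Finset (Fin m)) {c, d} then -1 else 1) := by
    intro a b c d hab hcd
    exact sign_prod_aux r a b c d hab hcd
  have hA : (r ∈ symmDiff ({i₁, j₁} : Finset (Fin m)) {k₁, l₁}) ≠
      (r ∈ symmDiff ({i₂, j₂} : Finset (Fin m)) {k₂, l₂}) := by
    intro h; exact hr (by rw [h])
  by_cases hrA : r ∈ symmDiff ({i₁, j₁} : Finset (Fin m)) {k₁, l₁}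
  · have hrB : r ∉ symmDiff ({i₂, j₂} : Finset (Fin m)) {k₂, l₂} := by
      intro h; exact hA (by simp [hrA, h])
    refine covar_zero_of_flip _ e he _ _ (fun ω => ?_) (fun ω => ?_)
    · rw [hsm ω _ _ _ _ h₁ h₂, hsign _ _ _ _ h₁.ne h₂.ne, if_pos hrA]; ring
    · rw [hsm ω _ _ _ _ h₃ h₄, hsign _ _ _ _ h₃.ne h₄.ne, if_neg hrB]; ring
  · have hrB : r ∈ symmDiff ({i₂, j₂} : Finset (Fin m)) {k₂, l₂} := by
      by_contra h; exact hA (by simp [hrA, h])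
    rw [covar_comm']
    refine covar_zero_of_flip _ e he _ _ (fun ω => ?_) (fun ω => ?_)
    · rw [hsm ω _ _ _ _ h₃ h₄, hsign _ _ _ _ h₃.ne h₄.ne, if_pos hrB]; ring
    · rw [hsm ω _ _ _ _ h₁ h₂, hsign _ _ _ _ h₁.ne h₂.ne, if_neg hrA]; ring
end

section
/- Let n, m ≥ 4, let X be an m×n random matrix whose entries are independent standard normal N(0,1) random variables, and set W = XXᵀ. Fix 1 ≤ i < j < k < l ≤ m. Then Var(det W_{{i,j},{k,l}}) = Var(det W_{{i,k},{j,l}}) = Var(det W_{{i,l},{j,k}}) = 2n(n−1), Cov(det W_{{i,j},{k,l}}, det W_{{i,k},{j,l}}) = n(n−1), Cov(det W_{{i,j},{k,l}}, det W_{{i,l},{j,k}}) = −n(n−1), and Cov(det W_{{i,k},{j,l}}, det W_{{i,l},{j,k}}) = n(n−1). -/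
open MeasureTheory ProbabilityTheory Matrix

/-! Write `ω` for the entries of `X`, so that `W_ab = ∑ₜ ω(a,t) ω(b,t)`. For rows
`i < j < k < l` the three tetrads are differences of the three matching products
`A = W_ij W_kl`, `B = W_ik W_jl`, `C = W_il W_jk`. Expanding products of these turns them into
sums of Gaussian monomials in the independent entries; such a monomial has expectation `0` as
soon as some entry occurs exactly once, and `1` when every entry occurs exactly twice, and for
four distinct rows no other case arises. Counting the surviving terms gives `E A = 0`,
`E A² = n²` (columns paired within each factor) and `E[A B] = n` (all four columns equal), and
the covariances of the tetrads follow by bilinearity. -/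

lemma integrable_pow_gaussianReal (μ : ℝ) (v : NNReal) (k : ℕ) :
    Integrable (fun x => x ^ k) (gaussianReal μ v) :=
  (integrable_norm_iff (by fun_prop)).mp
    (by simpa [norm_pow] using (memLp_id_gaussianReal (μ := μ) (v := v) k).integrable_norm_pow')

lemma integral_sq_gaussianReal (μ : ℝ) (v : NNReal) :
    ∫ x, x ^ 2 ∂gaussianReal μ v = μ ^ 2 + v := by
  have h := variance_eq_sub (memLp_id_gaussianReal (μ := μ) (v := v) 2)
  simp [variance_id_gaussianReal, integral_id_gaussianReal] at h
  linarith

lemma covariance_eq_integral_mul_of_integral_eq_zero {Ω : Type*} [MeasurableSpace Ω]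
    {μ : Measure Ω} [IsProbabilityMeasure μ] {X Y : Ω → ℝ} (hX : MemLp X 2 μ)
    (hY : MemLp Y 2 μ) (h : μ[X] = 0) : cov[X, Y; μ] = μ[X * Y] := by
  rw [covariance_eq_sub hX hY, h, zero_mul, sub_zero]

section Monomial
variable {ι : Type*} [Fintype ι] [DecidableEq ι]

lemma Multiset.prod_map_eq_prod_pow_count {M : Type*} [CommMonoid M] (s : Multiset ι)
    (f : ι → M) : (s.map f).prod = ∏ q, f q ^ s.count q := by
  rw [Finset.prod_multiset_map_count]
  exact Finset.prod_subset (Finset.subset_univ _) fun q _ hq => by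
    rw [Multiset.count_eq_zero.mpr (by simpa using hq), pow_zero]

lemma integral_multiset_prod_pi (μ : Measure ℝ) [SigmaFinite μ] (s : Multiset ι) :
    ∫ ω, (s.map ω).prod ∂Measure.pi (fun _ => μ) = ∏ q, ∫ x, x ^ s.count q ∂μ := by
  simp_rw [Multiset.prod_map_eq_prod_pow_count]
  exact integral_fintype_prod_eq_prod (fun q x => x ^ s.count q)

lemma integrable_multiset_prod_pi {μ : Measure ℝ} [SigmaFinite μ]
    (hμ : ∀ k : ℕ, Integrable (fun x => x ^ k) μ) (s : Multiset ι) :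
    Integrable (fun ω => (s.map ω).prod) (Measure.pi fun _ => μ) := by
  simp_rw [Multiset.prod_map_eq_prod_pow_count]
  exact Integrable.fintype_prod fun q => hμ (s.count q)

lemma integral_multiset_prod_stdGaussian_of_count_eq_one {s : Multiset ι} {q : ι}
    (hq : s.count q = 1) :
    ∫ ω, (s.map ω).prod ∂Measure.pi (fun _ => gaussianReal 0 1) = 0 := by
  rw [integral_multiset_prod_pi]
  exact Finset.prod_eq_zero (Finset.mem_univ q) (by simp [hq, integral_id_gaussianReal])

lemma integral_multiset_prod_stdGaussian_add_self {s : Multiset ι} (hs : s.Nodup) :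
    ∫ ω, ((s + s).map ω).prod ∂Measure.pi (fun _ => gaussianReal 0 1) = 1 := by
  rw [integral_multiset_prod_pi]
  refine Finset.prod_eq_one fun q _ => ?_
  rw [Multiset.count_add, Multiset.count_eq_of_nodup hs]
  split_ifs <;> simp [integral_sq_gaussianReal]

end Monomial

section Gram
variable {R K : Type*} [Fintype K]

def rowGram (ω : R × K → ℝ) (a b : R) : ℝ := ∑ t, ω (a, t) * ω (b, t)

lemma rowGram_comm (ω : R × K → ℝ) (a b : R) : rowGram ω a b = rowGram ω b a := by
  simp only [rowGram, mul_comm]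

lemma rowGram_mul_rowGram (ω : R × K → ℝ) (p q r w : R) :
    rowGram ω p q * rowGram ω r w =
      ∑ s, ∑ t, (({(p, s), (q, s), (r, t), (w, t)} : Multiset (R × K)).map ω).prod := by
  simp only [rowGram, Finset.sum_mul_sum]
  simp [mul_assoc]

lemma rowGram_mul_rowGram_mul_rowGram_mul_rowGram (ω : R × K → ℝ) (p q r w p' q' r' w' : R) :
    rowGram ω p q * rowGram ω r w * (rowGram ω p' q' * rowGram ω r' w') =
      ∑ s, ∑ u, ∑ t, ∑ v, (({(p, s), (q, s), (r, t), (w, t)} +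
        {(p', u), (q', u), (r', v), (w', v)} : Multiset (R × K)).map ω).prod := by
  simp only [rowGram_mul_rowGram, Finset.sum_mul_sum, Multiset.map_add, Multiset.prod_add]

variable [Fintype R] [DecidableEq R] [DecidableEq K]

local notation "γ" => Measure.pi fun _ : R × K => gaussianReal 0 1

lemma integrable_multiset_prod_stdGaussian (s : Multiset (R × K)) :
    Integrable (fun ω => (s.map ω).prod) γ :=
  integrable_multiset_prod_pi (integrable_pow_gaussianReal 0 1) s

lemma integrable_rowGram_mul_rowGram_mul_rowGram_mul_rowGram (p q r w p' q' r' w' : R) :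
    Integrable (fun ω => rowGram ω p q * rowGram ω r w * (rowGram ω p' q' * rowGram ω r' w'))
      γ := by
  simp only [rowGram_mul_rowGram_mul_rowGram_mul_rowGram]
  exact integrable_finsetSum _ fun s _ => integrable_finsetSum _ fun t _ =>
    integrable_finsetSum _ fun u _ => integrable_finsetSum _ fun v _ =>
      integrable_multiset_prod_stdGaussian _

lemma memLp_rowGram_mul_rowGram (p q r w : R) :
    MemLp (fun ω => rowGram ω p q * rowGram ω r w) 2 γ :=
  (memLp_two_iff_integrable_sq (by unfold rowGram; fun_prop)).mpr <| by
    simpa only [sq] using integrable_rowGram_mul_rowGram_mul_rowGram_mul_rowGram p q r w p q r w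

lemma integral_rowGram_mul_rowGram {p q r w : R} (hpq : p ≠ q) (hpr : p ≠ r) (hpw : p ≠ w) :
    ∫ ω, rowGram ω p q * rowGram ω r w ∂γ = 0 := by
  simp only [rowGram_mul_rowGram, integral_finsetSum, integrable_finsetSum,
    integrable_multiset_prod_stdGaussian, implies_true]
  refine Finset.sum_eq_zero fun s _ => Finset.sum_eq_zero fun t _ => ?_
  refine integral_multiset_prod_stdGaussian_of_count_eq_one (q := (p, s)) ?_
  simp [hpq, hpr, hpw]

section Distinct
variable {p q r w : R} (hpq : p ≠ q) (hpr : p ≠ r) (hpw : p ≠ w) (hqr : q ≠ r)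
  (hqw : q ≠ w) (hrw : r ≠ w)
include hpq hpr hpw hqr hqw hrw

lemma integral_multiset_prod_aligned (s u t v : K) :
    ∫ ω, (({(p, s), (q, s), (r, t), (w, t)} + {(p, u), (q, u), (r, v), (w, v)} :
      Multiset (R × K)).map ω).prod ∂γ = if s = u ∧ t = v then 1 else 0 := by
  by_cases hsu : s = u
  · by_cases htv : t = v
    · subst hsu htv
      rw [if_pos ⟨rfl, rfl⟩]
      exact integral_multiset_prod_stdGaussian_add_self (by simp [*])
    · rw [if_neg (by tauto)]
      exact integral_multiset_prod_stdGaussian_of_count_eq_one (q := (r, t))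
        (by simp [*, hpr.symm, hqr.symm, Ne.symm htv])
  · rw [if_neg (by tauto)]
    exact integral_multiset_prod_stdGaussian_of_count_eq_one (q := (p, s)) (by simp [*])

lemma integral_multiset_prod_crossed (s u t v : K) :
    ∫ ω, (({(p, s), (q, s), (r, t), (w, t)} + {(p, u), (r, u), (q, v), (w, v)} :
      Multiset (R × K)).map ω).prod ∂γ = if u = s ∧ t = s ∧ v = s then 1 else 0 := by
  by_cases hsu : u = s
  · by_cases hts : t = s
    · by_cases hvs : v = s
      · subst u t v
        have hswap : ({(p, s), (r, s), (q, s), (w, s)} : Multiset (R × K)) =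
            {(p, s), (q, s), (r, s), (w, s)} :=
          congrArg (insert (p, s)) (Multiset.cons_swap _ _ _)
        rw [if_pos ⟨rfl, rfl, rfl⟩, hswap]
        exact integral_multiset_prod_stdGaussian_add_self (by simp [*])
      · rw [if_neg (by tauto)]
        exact integral_multiset_prod_stdGaussian_of_count_eq_one (q := (q, v))
          (by simp [*, hpq.symm, Ne.symm hvs])
    · rw [if_neg (by tauto)]
      exact integral_multiset_prod_stdGaussian_of_count_eq_one (q := (r, t))
        (by simp [*, hpr.symm, hqr.symm])
  · rw [if_neg (by tauto)]
    exact integral_multiset_prod_stdGaussian_of_count_eq_one (q := (p, s))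
      (by simp [*, Ne.symm hsu])

lemma integral_rowGram_mul_rowGram_mul_self :
    ∫ ω, rowGram ω p q * rowGram ω r w * (rowGram ω p q * rowGram ω r w) ∂γ =
      (Fintype.card K : ℝ) ^ 2 := by
  simp (maxDischargeDepth := 5) only [rowGram_mul_rowGram_mul_rowGram_mul_rowGram,
    integral_finsetSum, integrable_finsetSum, integrable_multiset_prod_stdGaussian, implies_true,
    integral_multiset_prod_aligned hpq hpr hpw hqr hqw hrw]
  simp [Finset.sum_ite_eq, ite_and, sq]

lemma integral_rowGram_mul_rowGram_mul_crossed :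
    ∫ ω, rowGram ω p q * rowGram ω r w * (rowGram ω p r * rowGram ω q w) ∂γ =
      Fintype.card K := by
  simp (maxDischargeDepth := 5) only [rowGram_mul_rowGram_mul_rowGram_mul_rowGram,
    integral_finsetSum, integrable_finsetSum, integrable_multiset_prod_stdGaussian, implies_true,
    integral_multiset_prod_crossed hpq hpr hpw hqr hqw hrw]
  simp [ite_and]

lemma covariance_rowGram_mul_rowGram_self :
    cov[fun ω => rowGram ω p q * rowGram ω r w, fun ω => rowGram ω p q * rowGram ω r w; γ] =
      (Fintype.card K : ℝ) ^ 2 := by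
  rw [covariance_eq_integral_mul_of_integral_eq_zero (memLp_rowGram_mul_rowGram _ _ _ _)
    (memLp_rowGram_mul_rowGram _ _ _ _) (integral_rowGram_mul_rowGram hpq hpr hpw)]
  exact integral_rowGram_mul_rowGram_mul_self hpq hpr hpw hqr hqw hrw

lemma covariance_rowGram_mul_rowGram_crossed :
    cov[fun ω => rowGram ω p q * rowGram ω r w, fun ω => rowGram ω p r * rowGram ω q w; γ] =
      Fintype.card K := by
  rw [covariance_eq_integral_mul_of_integral_eq_zero (memLp_rowGram_mul_rowGram _ _ _ _)
    (memLp_rowGram_mul_rowGram _ _ _ _) (integral_rowGram_mul_rowGram hpq hpr hpw)]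
  exact integral_rowGram_mul_rowGram_mul_crossed hpq hpr hpw hqr hqw hrw

lemma covariance_matchings :
    let A := fun ω => rowGram ω p q * rowGram ω r w
    let B := fun ω => rowGram ω p r * rowGram ω q w
    let C := fun ω => rowGram ω p w * rowGram ω q r
    cov[A, A; γ] = (Fintype.card K : ℝ) ^ 2 ∧ cov[B, B; γ] = (Fintype.card K : ℝ) ^ 2 ∧
      cov[C, C; γ] = (Fintype.card K : ℝ) ^ 2 ∧ cov[A, B; γ] = Fintype.card K ∧
      cov[A, C; γ] = Fintype.card K ∧ cov[B, C; γ] = Fintype.card K := by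
  refine ⟨covariance_rowGram_mul_rowGram_self hpq hpr hpw hqr hqw hrw,
    covariance_rowGram_mul_rowGram_self hpr hpq hpw hqr.symm hrw hqw,
    covariance_rowGram_mul_rowGram_self hpw hpq hpr hqw.symm hrw.symm hqr,
    covariance_rowGram_mul_rowGram_crossed hpq hpr hpw hqr hqw hrw, ?_, ?_⟩
  · simpa only [rowGram_comm _ w r] using
      covariance_rowGram_mul_rowGram_crossed hpq hpw hpr hqw hqr hrw.symm
  · simpa only [rowGram_comm _ w q, rowGram_comm _ r q] using
      covariance_rowGram_mul_rowGram_crossed hpr hpw hpq hrw hqr.symm hqw.symm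

end Distinct

end Gram

lemma sminor_of_lt {m : ℕ} (M : Matrix (Fin m) (Fin m) ℝ) {a b c d : Fin m} (hab : a < b)
    (hcd : c < d) : sminor M a b c d = M a c * M b d - M a d * M b c := by
  rw [sminor, min_eq_left hab.le, max_eq_right hab.le, min_eq_left hcd.le, max_eq_right hcd.le]

lemma covar_eq_covariance {Ω : Type*} [MeasurableSpace Ω] (μ : Measure Ω) (f g : Ω → ℝ) :
    covar μ f g = cov[f, g; μ] := rfl

theorem cov_tetrads_wishart_general
    {m n : ℕ}
    (X : ((Fin m × Fin n) → ℝ) → Matrix (Fin m) (Fin n) ℝ)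
    (hX : ∀ ω, X ω = Matrix.of fun i t => ω (i, t))
    (W : ((Fin m × Fin n) → ℝ) → Matrix (Fin m) (Fin m) ℝ)
    (hW : ∀ ω, W ω = X ω * (X ω)ᵀ)
    (i j k l : Fin m) (hij : i < j) (hjk : j < k) (hkl : k < l) :
    covar (stdGaussianMatrixMeasure m n)
        (fun ω => sminor (W ω) i j k l) (fun ω => sminor (W ω) i j k l) =
      2 * (n : ℝ) * ((n : ℝ) - 1) ∧
    covar (stdGaussianMatrixMeasure m n)
        (fun ω => sminor (W ω) i k j l) (fun ω => sminor (W ω) i k j l) =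
      2 * (n : ℝ) * ((n : ℝ) - 1) ∧
    covar (stdGaussianMatrixMeasure m n)
        (fun ω => sminor (W ω) i l j k) (fun ω => sminor (W ω) i l j k) =
      2 * (n : ℝ) * ((n : ℝ) - 1) ∧
    covar (stdGaussianMatrixMeasure m n)
        (fun ω => sminor (W ω) i j k l) (fun ω => sminor (W ω) i k j l) =
      (n : ℝ) * ((n : ℝ) - 1) ∧
    covar (stdGaussianMatrixMeasure m n)
        (fun ω => sminor (W ω) i j k l) (fun ω => sminor (W ω) i l j k) =
      -((n : ℝ) * ((n : ℝ) - 1)) ∧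
    covar (stdGaussianMatrixMeasure m n)
        (fun ω => sminor (W ω) i k j l) (fun ω => sminor (W ω) i l j k) =
      (n : ℝ) * ((n : ℝ) - 1) := by
  have hik := hij.trans hjk
  have hjl := hjk.trans hkl
  have hil := hik.trans hkl
  have hWrowGram : ∀ ω a b, W ω a b = rowGram ω a b := fun ω a b => by
    simp [hW, hX, Matrix.mul_apply, rowGram]
  obtain ⟨hAA, hBB, hCC, hAB, hAC, hBC⟩ :=
    covariance_matchings (K := Fin n) hij.ne hik.ne hil.ne hjk.ne hjl.ne hkl.ne
  simp only [covar_eq_covariance, stdGaussianMatrixMeasure, sminor_of_lt _ hij hkl,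
    sminor_of_lt _ hik hjl, sminor_of_lt _ hil hjk, hWrowGram, rowGram_comm _ k j,
    rowGram_comm _ l k, rowGram_comm _ l j,
    covariance_fun_sub_fun_sub (memLp_rowGram_mul_rowGram _ _ _ _)
      (memLp_rowGram_mul_rowGram _ _ _ _) (memLp_rowGram_mul_rowGram _ _ _ _)
      (memLp_rowGram_mul_rowGram _ _ _ _),
    hAA, hBB, hCC, hAB, hAC, hBC, (covariance_comm _ _).trans hAB,
    (covariance_comm _ _).trans hAC, (covariance_comm _ _).trans hBC, Fintype.card_fin]
  refine ⟨?_, ?_, ?_, ?_, ?_, ?_⟩ <;> ring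

/-- Covariance structure of the three tetrads of a standard Wishart matrix `W = XXᵀ` in
the block indexed by the symmetric difference `{i,j,k,l}` with `i < j < k < l`:
`Var(det W_{{i,j},{k,l}}) = Var(det W_{{i,k},{j,l}}) = Var(det W_{{i,l},{j,k}}) = 2n(n−1)`,
`Cov(det W_{{i,j},{k,l}}, det W_{{i,k},{j,l}}) = n(n−1)`,
`Cov(det W_{{i,j},{k,l}}, det W_{{i,l},{j,k}}) = −n(n−1)`, and
`Cov(det W_{{i,k},{j,l}}, det W_{{i,l},{j,k}}) = n(n−1)`. -/
theorem cov_tetrads_wishart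
    {m n : ℕ} (hm : 4 ≤ m) (hn : 4 ≤ n)
    (X : ((Fin m × Fin n) → ℝ) → Matrix (Fin m) (Fin n) ℝ)
    (hX : ∀ ω, X ω = Matrix.of fun i t => ω (i, t))
    (W : ((Fin m × Fin n) → ℝ) → Matrix (Fin m) (Fin m) ℝ)
    (hW : ∀ ω, W ω = X ω * (X ω)ᵀ)
    (i j k l : Fin m) (hij : i < j) (hjk : j < k) (hkl : k < l) :
    covar (stdGaussianMatrixMeasure m n)
        (fun ω => sminor (W ω) i j k l) (fun ω => sminor (W ω) i j k l) =
      2 * (n : ℝ) * ((n : ℝ) - 1) ∧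
    covar (stdGaussianMatrixMeasure m n)
        (fun ω => sminor (W ω) i k j l) (fun ω => sminor (W ω) i k j l) =
      2 * (n : ℝ) * ((n : ℝ) - 1) ∧
    covar (stdGaussianMatrixMeasure m n)
        (fun ω => sminor (W ω) i l j k) (fun ω => sminor (W ω) i l j k) =
      2 * (n : ℝ) * ((n : ℝ) - 1) ∧
    covar (stdGaussianMatrixMeasure m n)
        (fun ω => sminor (W ω) i j k l) (fun ω => sminor (W ω) i k j l) =
      (n : ℝ) * ((n : ℝ) - 1) ∧
    covar (stdGaussianMatrixMeasure m n)
        (fun ω => sminor (W ω) i j k l) (fun ω => sminor (W ω) i l j k) =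
      -((n : ℝ) * ((n : ℝ) - 1)) ∧
    covar (stdGaussianMatrixMeasure m n)
        (fun ω => sminor (W ω) i k j l) (fun ω => sminor (W ω) i l j k) =
      (n : ℝ) * ((n : ℝ) - 1) :=
  cov_tetrads_wishart_general X hX W hW i j k l hij hjk hkl
end
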